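/- arXiv:2103.05120 — 9 statements merged into one kernel-verified Lean document; each statement's English description precedes it below -/
import Mathlib

section
/- Let G be a finite simple graph and let v, w be distinct vertices of G such that the closed neighbourhood of v is contained in the closed neighbourhood of w (i.e. N[v] ⊆ N[w]). Then the geometric realization of the clique complex of G is homotopy equivalent to the geometric realization of the clique complex of G with v deleted. -/
/-- The standard basis vector `e_v : V → ℝ`. -/
def stdBasisVec {V : Type*} [DecidableEq V] (v : V) : V → ℝ := fun i => if i = v then 1 else 0

/-- The standard geometric realization of the clique complex of a finite simple graph `G`:
the union, over all cliques `s` of `G`, of the convex hulls of the corresponding sets of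
standard basis vectors in `V → ℝ`. -/
def cliqueRealization {V : Type*} [Fintype V] [DecidableEq V] (G : SimpleGraph V) :
    Set (V → ℝ) :=
  ⋃ s ∈ {s : Finset V | G.IsClique (s : Set V)}, convexHull ℝ (stdBasisVec '' (s : Set V))

/-- The closed neighbourhood `N[v] = {v} ∪ {u : uv ∈ E(G)}`. -/
def closedNbhd {V : Type*} (G : SimpleGraph V) (v : V) : Set V := insert v {u | G.Adj v u}

/-- Auxiliary: displacement direction `e_w - e_v`. -/
def segDir {V : Type*} [DecidableEq V] (v w : V) : V → ℝ :=
  fun i => (if i = w then 1 else 0) - (if i = v then 1 else 0)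

lemma mem_hull_iff {V : Type*} [Fintype V] [DecidableEq V] (s : Finset V) (x : V → ℝ) :
    x ∈ convexHull ℝ (stdBasisVec '' (s : Set V)) ↔
      (∀ i, 0 ≤ x i) ∧ (∑ i, x i = 1) ∧ ∀ i, x i ≠ 0 → i ∈ s := by
  constructor
  · intro hx
    have : convexHull ℝ (stdBasisVec '' (s : Set V)) ⊆
        {y : V → ℝ | (∀ i, 0 ≤ y i) ∧ (∑ i, y i = 1) ∧ ∀ i, y i ≠ 0 → i ∈ s} := by
      apply convexHull_min
      · rintro y ⟨u, hu, rfl⟩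
        refine ⟨fun i => ?_, ?_, fun i hi => ?_⟩
        · unfold stdBasisVec; split <;> norm_num
        · simp [stdBasisVec]
        · unfold stdBasisVec at hi
          by_contra hne
          have : i ≠ u := by rintro rfl; exact hne hu
          simp [this] at hi
      · intro y hy z hz a b ha hb hab
        obtain ⟨hy1, hy2, hy3⟩ := hy
        obtain ⟨hz1, hz2, hz3⟩ := hz
        refine ⟨fun i => add_nonneg (mul_nonneg ha (hy1 i)) (mul_nonneg hb (hz1 i)), ?_,
          fun i hi => ?_⟩
        · simp only [Pi.add_apply, Pi.smul_apply, smul_eq_mul]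
          rw [Finset.sum_add_distrib, ← Finset.mul_sum, ← Finset.mul_sum, hy2, hz2]
          linarith
        · simp only [Pi.add_apply, Pi.smul_apply, smul_eq_mul] at hi
          by_contra hne
          have h1 : y i = 0 := by by_contra hh; exact hne (hy3 i hh)
          have h2 : z i = 0 := by by_contra hh; exact hne (hz3 i hh)
          simp [h1, h2] at hi
    exact this hx
  · rintro ⟨h1, h2, h3⟩
    have hs : ∑ i ∈ s, x i = 1 := by
      rw [← h2]
      apply Finset.sum_subset (Finset.subset_univ s)
      intro i _ hi
      by_contra hh
      exact hi (h3 i hh)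
    have hx : x = s.centerMass x stdBasisVec := by
      rw [Finset.centerMass, hs, inv_one, one_smul]
      funext j
      simp only [Finset.sum_apply, Pi.smul_apply, smul_eq_mul, stdBasisVec]
      rw [Finset.sum_congr rfl (fun i _ => by rw [mul_ite, mul_one, mul_zero])]
      rw [Finset.sum_ite_eq s j x]
      split
      · rfl
      · next hns =>
        by_contra hh
        exact hns (h3 j hh)
    rw [hx]
    apply Finset.centerMass_mem_convexHull
    · exact fun i _ => h1 i
    · rw [hs]; norm_num
    · exact fun i hi => Set.mem_image_of_mem _ hi

lemma mem_cliqueRealization {V : Type*} [Fintype V] [DecidableEq V] (G : SimpleGraph V)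
    (x : V → ℝ) :
    x ∈ cliqueRealization G ↔
      (∀ i, 0 ≤ x i) ∧ (∑ i, x i = 1) ∧ G.IsClique {i | x i ≠ 0} := by
  constructor
  · rintro hx
    simp only [cliqueRealization, Set.mem_iUnion, Set.mem_setOf_eq] at hx
    obtain ⟨s, hs, hxs⟩ := hx
    rw [mem_hull_iff] at hxs
    obtain ⟨h1, h2, h3⟩ := hxs
    exact ⟨h1, h2, hs.subset (fun i hi => h3 i hi)⟩
  · rintro ⟨h1, h2, h3⟩
    simp only [cliqueRealization, Set.mem_iUnion, Set.mem_setOf_eq]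
    refine ⟨Finset.univ.filter (fun i => x i ≠ 0), ?_, ?_⟩
    · convert h3 using 1
      ext i; simp
    · rw [mem_hull_iff]
      exact ⟨h1, h2, fun i hi => by simp [hi]⟩

lemma insert_clique {V : Type*} (G : SimpleGraph V) (v w : V) (hvw : v ≠ w)
    (h : closedNbhd G v ⊆ closedNbhd G w)
    {S : Set V} (hS : G.IsClique S) (hv : v ∈ S) : G.IsClique (insert w S) := by
  apply hS.insert
  intro b hb hbw
  have hbN : b ∈ closedNbhd G v := by
    rcases eq_or_ne b v with rfl | hbv
    · exact Set.mem_insert _ _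
    · exact Set.mem_insert_iff.mpr (Or.inr (hS hv hb (Ne.symm hbv)))
  rcases Set.mem_insert_iff.mp (h hbN) with rfl | hadj
  · exact absurd rfl hbw
  · exact hadj

lemma seg_mem {V : Type*} [Fintype V] [DecidableEq V] (G : SimpleGraph V) (v w : V)
    (hvw : v ≠ w) (h : closedNbhd G v ⊆ closedNbhd G w) {x : V → ℝ}
    (hx : x ∈ cliqueRealization G) {c : ℝ} (hc0 : 0 ≤ c) (hc1 : c ≤ x v) :
    (fun i => x i + c * segDir v w i) ∈ cliqueRealization G := by
  rw [mem_cliqueRealization] at hx ⊢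
  obtain ⟨h1, h2, h3⟩ := hx
  refine ⟨fun i => ?_, ?_, ?_⟩
  · rcases eq_or_ne i v with hi | hiv
    · subst hi
      have hd : segDir i w i = -1 := by simp [segDir, hvw]
      rw [hd]; nlinarith
    · rcases eq_or_ne i w with hi | hiw
      · subst hi
        have hd : segDir v i i = 1 := by simp [segDir, Ne.symm hvw]
        rw [hd]; nlinarith [h1 i]
      · have hd : segDir v w i = 0 := by simp [segDir, hiv, hiw]
        rw [hd]; simpa using h1 i
  · have hsd : ∑ i, segDir v w i = 0 := by
      unfold segDir
      rw [Finset.sum_sub_distrib]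
      simp [Finset.sum_ite_eq']
    rw [Finset.sum_add_distrib, h2, ← Finset.mul_sum, hsd, mul_zero, add_zero]
  · rcases eq_or_ne c 0 with rfl | hc
    · simpa using h3
    · have hxv : x v ≠ 0 := fun hz => hc (le_antisymm (hz ▸ hc1) hc0)
      have hclique := insert_clique G v w hvw h h3 (by exact hxv)
      apply hclique.subset
      intro i hi
      simp only [Set.mem_setOf_eq] at hi
      rcases eq_or_ne i w with rfl | hiw
      · exact Set.mem_insert _ _
      · apply Set.mem_insert_of_mem
        rcases eq_or_ne i v with rfl | hiv
        · exact hxv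
        · simp only [Set.mem_setOf_eq]
          intro hz
          apply hi
          unfold segDir
          rw [if_neg hiw, if_neg hiv, hz]; ring

lemma proj_mem {V : Type*} [Fintype V] [DecidableEq V] (G : SimpleGraph V) (v : V)
    {z : V → ℝ} (hz : z ∈ cliqueRealization G) (hzv : z v = 0) :
    (fun u : {u : V // u ≠ v} => z u.1) ∈
      cliqueRealization (G.comap (Subtype.val : {u : V // u ≠ v} → V)) := by
  rw [mem_cliqueRealization] at hz ⊢
  obtain ⟨h1, h2, h3⟩ := hz
  refine ⟨fun u => h1 u.1, ?_, ?_⟩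
  · have e1 : ∑ i ∈ Finset.univ.erase v, z i = ∑ u : {u : V // u ≠ v}, z u.1 :=
      Finset.sum_subtype _ (fun i => by simp) z
    rw [← e1, Finset.sum_erase _ hzv, h2]
  · intro a ha b hb hab
    exact h3 ha hb (fun hh => hab (Subtype.ext hh))

lemma incl_mem {V : Type*} [Fintype V] [DecidableEq V] (G : SimpleGraph V) (v : V)
    {y : {u : V // u ≠ v} → ℝ}
    (hy : y ∈ cliqueRealization (G.comap (Subtype.val : {u : V // u ≠ v} → V))) :
    (fun i => if hi : i = v then (0:ℝ) else y ⟨i, hi⟩) ∈ cliqueRealization G := by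
  rw [mem_cliqueRealization] at hy ⊢
  obtain ⟨h1, h2, h3⟩ := hy
  refine ⟨fun i => ?_, ?_, ?_⟩
  · by_cases hi : i = v
    · simp [hi]
    · simpa [hi] using h1 ⟨i, hi⟩
  · have e1 : ∑ i ∈ Finset.univ.erase v, (if hi : i = v then (0:ℝ) else y ⟨i, hi⟩)
        = ∑ u : {u : V // u ≠ v}, (if hi : (u:V) = v then (0:ℝ) else y ⟨u, hi⟩) :=
      Finset.sum_subtype _ (fun i => by simp) _
    have e2 : ∑ u : {u : V // u ≠ v}, (if hi : (u:V) = v then (0:ℝ) else y ⟨u, hi⟩)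
        = ∑ u : {u : V // u ≠ v}, y u := by
      apply Finset.sum_congr rfl
      intro u _
      rw [dif_neg u.2]
    rw [← Finset.sum_erase Finset.univ (a := v) (by simp), e1, e2, h2]
  · intro a ha b hb hab
    simp only [Set.mem_setOf_eq] at ha hb
    have hav : a ≠ v := by intro hh; rw [dif_pos hh] at ha; exact ha rfl
    have hbv : b ≠ v := by intro hh; rw [dif_pos hh] at hb; exact hb rfl
    rw [dif_neg hav] at ha
    rw [dif_neg hbv] at hb
    exact h3 ha hb (fun hh => hab (congrArg Subtype.val hh))

theorem stmt_0 {V : Type*} [Fintype V] [DecidableEq V] (G : SimpleGraph V)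
    (v w : V) (hvw : v ≠ w) (h : closedNbhd G v ⊆ closedNbhd G w) :
    Nonempty (ContinuousMap.HomotopyEquiv
      ↥(cliqueRealization G)
      ↥(cliqueRealization (G.comap (Subtype.val : {u : V // u ≠ v} → V)))) := by
  have hsdv : segDir v w v = -1 := by simp [segDir, hvw]
  have hnn : ∀ x : ↥(cliqueRealization G), ∀ i, 0 ≤ (x : V → ℝ) i :=
    fun x => ((mem_cliqueRealization G x.1).mp x.2).1
  have hseg : ∀ (x : ↥(cliqueRealization G)) (c : ℝ), 0 ≤ c → c ≤ (x : V → ℝ) v →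
      (fun i => (x : V → ℝ) i + c * segDir v w i) ∈ cliqueRealization G :=
    fun x c hc0 hc1 => seg_mem G v w hvw h x.2 hc0 hc1
  have hPhiv : ∀ x : ↥(cliqueRealization G),
      ((x : V → ℝ) v + (x : V → ℝ) v * segDir v w v) = 0 := by
    intro x; rw [hsdv]; ring
  refine ⟨⟨⟨fun x => ⟨fun u => (x : V → ℝ) u.1 + (x : V → ℝ) v * segDir v w u.1, ?_⟩, ?_⟩,
    ⟨fun y => ⟨fun i => if hi : i = v then (0:ℝ) else y.1 ⟨i, hi⟩, incl_mem G v y.2⟩, ?_⟩,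
    ?_, ?_⟩⟩
  · exact proj_mem G v (hseg x _ (hnn x v) le_rfl) (hPhiv x)
  · -- continuity of forward map
    apply Continuous.subtype_mk
    apply continuous_pi
    intro u
    exact ((continuous_apply u.1).comp continuous_subtype_val).add
      ((((continuous_apply v).comp continuous_subtype_val)).mul continuous_const)
  · -- continuity of backward map
    apply Continuous.subtype_mk
    apply continuous_pi
    intro i
    by_cases hi : i = v
    · simp only [dif_pos hi]; exact continuous_const
    · simp only [dif_neg hi]
      exact (continuous_apply (⟨i, hi⟩ : {u : V // u ≠ v})).comp continuous_subtype_val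
  · -- left_inv : homotopy from bwd ∘ fwd to id
    constructor
    refine ⟨⟨fun p => ⟨fun i =>
        (p.2 : V → ℝ) i + (1 - (p.1 : ℝ)) * (p.2 : V → ℝ) v * segDir v w i, ?_⟩, ?_⟩, ?_, ?_⟩
    · apply hseg
      · have h1 : (p.1 : ℝ) ≤ 1 := p.1.2.2
        have h0 : (0:ℝ) ≤ (p.2 : V → ℝ) v := hnn p.2 v
        nlinarith
      · have h1 : (0:ℝ) ≤ (p.1 : ℝ) := p.1.2.1
        have h0 : (0:ℝ) ≤ (p.2 : V → ℝ) v := hnn p.2 v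
        nlinarith
    · apply Continuous.subtype_mk
      apply continuous_pi
      intro i
      refine ((continuous_apply i).comp (continuous_subtype_val.comp continuous_snd)).add ?_
      refine Continuous.mul ?_ continuous_const
      refine Continuous.mul ?_
        ((continuous_apply v).comp (continuous_subtype_val.comp continuous_snd))
      exact continuous_const.sub (continuous_subtype_val.comp continuous_fst)
    · intro x
      apply Subtype.ext
      funext i
      show (x : V → ℝ) i + (1 - (0:ℝ)) * (x : V → ℝ) v * segDir v w i = _
      by_cases hi : i = v
      · subst hi
        simp only [ContinuousMap.comp_apply, ContinuousMap.coe_mk, dif_pos rfl]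
        rw [hsdv]; norm_num
      · simp only [ContinuousMap.comp_apply, ContinuousMap.coe_mk, dif_neg hi]
        ring
    · intro x
      apply Subtype.ext
      funext i
      show (x : V → ℝ) i + (1 - (1:ℝ)) * (x : V → ℝ) v * segDir v w i = _
      simp
  · -- right_inv : fwd ∘ bwd = id
    refine ⟨(ContinuousMap.Homotopy.refl (ContinuousMap.id _)).cast ?_ rfl⟩
    symm
    apply ContinuousMap.ext
    intro y
    apply Subtype.ext
    funext u
    show (if hi : (u:V) = v then (0:ℝ) else y.1 ⟨u.1, hi⟩)
        + (if hi : v = v then (0:ℝ) else y.1 ⟨v, hi⟩) * segDir v w u.1 = y.1 u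
    rw [dif_pos rfl, dif_neg u.2, zero_mul, add_zero]
end

section
/- Every cop-win finite simple graph has a contractible clique complex. -/
/-- A finite graph is cop-win iff it is dismantlable: the vertices can be enumerated
`v_0, …, v_{n-1}` so that, for every `ℓ ≥ 1`, the closed neighbourhood of `v_ℓ` in the induced
subgraph on `{v_0, …, v_ℓ}` is contained in the closed neighbourhood (in that subgraph) of some
earlier vertex (the Aigner–Fromme / Quilliot characterization). -/
def CopWin {V : Type*} [Fintype V] (G : SimpleGraph V) : Prop :=
  ∃ (n : ℕ) (e : V ≃ Fin n), ∀ v : V, 0 < (e v).val → ∃ w : V, ∃ hw : e w < e v,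
    closedNbhd (G.comap (Subtype.val : {u : V // e u ≤ e v} → V)) ⟨v, le_refl _⟩ ⊆
    closedNbhd (G.comap (Subtype.val : {u : V // e u ≤ e v} → V)) ⟨w, le_of_lt hw⟩

open Set

section Realization

variable {V : Type*} [DecidableEq V]

def faceRealization (K : Set (Finset V)) : Set (V → ℝ) :=
  ⋃ s ∈ K, convexHull ℝ (stdBasisVec '' (s : Set V))

lemma mem_faceRealization {K : Set (Finset V)} {x : V → ℝ} :
    x ∈ faceRealization K ↔ ∃ s ∈ K, x ∈ convexHull ℝ (stdBasisVec '' (s : Set V)) := by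
  simp only [faceRealization, mem_iUnion, exists_prop]

lemma convexHull_subset_faceRealization {K : Set (Finset V)} {s : Finset V} (hs : s ∈ K) :
    convexHull ℝ (stdBasisVec '' (s : Set V)) ⊆ faceRealization K :=
  fun _ hx => mem_faceRealization.mpr ⟨s, hs, hx⟩

lemma faceRealization_mono {K L : Set (Finset V)} (h : K ⊆ L) :
    faceRealization K ⊆ faceRealization L :=
  biUnion_subset_biUnion_left h

variable [Fintype V]

noncomputable def vertexMapLinear (π : V → V) : (V → ℝ) →ₗ[ℝ] V → ℝ :=
  ∑ u, (LinearMap.proj u).smulRight (stdBasisVec (π u))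

lemma vertexMapLinear_stdBasisVec (π : V → V) (v : V) :
    vertexMapLinear π (stdBasisVec v) = stdBasisVec (π v) := by
  simp [vertexMapLinear, stdBasisVec]

lemma vertexMapLinear_mem_convexHull (π : V → V) {s : Finset V} {x : V → ℝ}
    (hx : x ∈ convexHull ℝ (stdBasisVec '' (s : Set V))) :
    vertexMapLinear π x ∈ convexHull ℝ (stdBasisVec '' ((s.image π : Finset V) : Set V)) := by
  have himage : vertexMapLinear π '' (stdBasisVec '' (s : Set V)) =
      stdBasisVec '' ((s.image π : Finset V) : Set V) := by
    rw [image_image, Finset.coe_image, image_image]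
    simp only [vertexMapLinear_stdBasisVec]
  rw [← himage, ← LinearMap.image_convexHull]
  exact mem_image_of_mem _ hx

lemma segment_vertexMapLinear_subset (π : V → V) {s : Finset V} {x : V → ℝ}
    (hx : x ∈ convexHull ℝ (stdBasisVec '' (s : Set V))) :
    segment ℝ x (vertexMapLinear π x) ⊆
      convexHull ℝ (stdBasisVec '' ((s ∪ s.image π : Finset V) : Set V)) := by
  have hmono : ∀ t ⊆ s ∪ s.image π, convexHull ℝ (stdBasisVec '' (t : Set V)) ⊆
      convexHull ℝ (stdBasisVec '' ((s ∪ s.image π : Finset V) : Set V)) := fun t ht =>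
    convexHull_mono (image_mono (Finset.coe_subset.mpr ht))
  exact (convex_convexHull ℝ _).segment_subset (hmono _ Finset.subset_union_left hx)
    (hmono _ Finset.subset_union_right (vertexMapLinear_mem_convexHull π hx))

end Realization

theorem ContinuousMap.homotopic_of_segment_subset {X E : Type*} [TopologicalSpace X]
    [AddCommGroup E] [TopologicalSpace E] [IsTopologicalAddGroup E] [Module ℝ E]
    [ContinuousSMul ℝ E] {S : Set E} (f g : C(X, S))
    (h : ∀ x, segment ℝ (f x : E) (g x) ⊆ S) : f.Homotopic g := by
  let val : C(S, E) := ⟨Subtype.val, continuous_subtype_val⟩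
  let H := Homotopy.affine (val.comp f) (val.comp g)
  refine ⟨⟨⟨fun p => ⟨H p, h p.2 ?_⟩, H.continuous.subtype_mk _⟩, ?_, ?_⟩⟩
  · rw [← Path.range_segment]
    exact mem_range_self _
  · exact fun x => Subtype.ext (H.apply_zero x)
  · exact fun x => Subtype.ext (H.apply_one x)

section Retraction

variable {V : Type*} [DecidableEq V] [Fintype V] {K L : Set (Finset V)} (π : V → V)

lemma vertexMapLinear_mem_faceRealization (hmaps : ∀ s ∈ K, s.image π ∈ L) {x : V → ℝ}
    (hx : x ∈ faceRealization K) : vertexMapLinear π x ∈ faceRealization L := by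
  obtain ⟨s, hs, hxs⟩ := mem_faceRealization.mp hx
  exact mem_faceRealization.mpr ⟨_, hmaps s hs, vertexMapLinear_mem_convexHull π hxs⟩

lemma segment_vertexMapLinear_subset_faceRealization (hcont : ∀ s ∈ K, s ∪ s.image π ∈ K)
    {x : V → ℝ} (hx : x ∈ faceRealization K) :
    segment ℝ (vertexMapLinear π x) x ⊆ faceRealization K := by
  obtain ⟨s, hs, hxs⟩ := mem_faceRealization.mp hx
  rw [segment_symm]
  exact (segment_vertexMapLinear_subset π hxs).trans
    (convexHull_subset_faceRealization (hcont s hs))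

noncomputable def faceRealizationMap (hmaps : ∀ s ∈ K, s.image π ∈ L) :
    C(faceRealization K, faceRealization L) :=
  ⟨fun x => ⟨_, vertexMapLinear_mem_faceRealization π hmaps x.2⟩,
    ((vertexMapLinear π).continuous_of_finiteDimensional.comp continuous_subtype_val).subtype_mk
      _⟩

/-- Since every face spans a face together with its image, the straight-line homotopy between `π`
and the identity stays inside the realization. -/
noncomputable def homotopyEquivOfVertexRetraction (hLK : L ⊆ K)
    (hmaps : ∀ s ∈ K, s.image π ∈ L) (hK : ∀ s ∈ K, s ∪ s.image π ∈ K)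
    (hL : ∀ s ∈ L, s ∪ s.image π ∈ L) :
    ContinuousMap.HomotopyEquiv (faceRealization K) (faceRealization L) where
  toFun := faceRealizationMap π hmaps
  invFun := ContinuousMap.inclusion (faceRealization_mono hLK)
  left_inv := ContinuousMap.homotopic_of_segment_subset _ _ fun x =>
    segment_vertexMapLinear_subset_faceRealization π hK x.2
  right_inv := ContinuousMap.homotopic_of_segment_subset _ _ fun x =>
    segment_vertexMapLinear_subset_faceRealization π hL x.2

end Retraction

section DominatedVertex

variable {V : Type*} [DecidableEq V] (G : SimpleGraph V)

def cliqueFacesIn (S : Set V) : Set (Finset V) := {s | G.IsClique (s : Set V) ∧ (s : Set V) ⊆ S}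

variable {G} {S : Set V} {v w : V}

lemma image_update_id_subset_insert (s : Finset V) :
    s.image (Function.update id v w) ⊆ insert w s := by
  intro u hu
  obtain ⟨a, ha, rfl⟩ := Finset.mem_image.mp hu
  by_cases hav : a = v
  · simp [hav]
  · simp [Function.update_of_ne hav, ha]

lemma notMem_image_update_id (hvw : v ≠ w) (s : Finset V) :
    v ∉ s.image (Function.update id v w) := by
  simp only [Finset.mem_image, not_exists, not_and]
  intro a _
  by_cases hav : a = v
  · simpa [hav] using hvw.symm
  · simpa [Function.update_of_ne hav] using hav

lemma image_update_id_of_notMem {s : Finset V} (hv : v ∉ s) :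
    s.image (Function.update id v w) = s := by
  conv_rhs => rw [← Finset.image_id (s := s)]
  refine Finset.image_congr fun u hu => Function.update_of_ne ?_ _ _
  rintro rfl
  exact hv hu

lemma isClique_insert_of_dominated (hdom : closedNbhd G v ∩ S ⊆ closedNbhd G w)
    {s : Finset V} (hs : s ∈ cliqueFacesIn G S) (hv : v ∈ s) :
    G.IsClique ((insert w s : Finset V) : Set V) := by
  rw [Finset.coe_insert, SimpleGraph.isClique_insert]
  refine ⟨hs.1, fun u hu hwu => ?_⟩
  have hvu : u ∈ closedNbhd G v := by
    by_cases h : u = v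
    · exact Or.inl h
    · exact Or.inr (hs.1 hv hu (Ne.symm h))
  exact (hdom ⟨hvu, hs.2 hu⟩).resolve_left (Ne.symm hwu)

lemma isClique_union_image_update_id (hdom : closedNbhd G v ∩ S ⊆ closedNbhd G w)
    {s : Finset V} (hs : s ∈ cliqueFacesIn G S) :
    G.IsClique ((s ∪ s.image (Function.update id v w) : Finset V) : Set V) := by
  by_cases hv : v ∈ s
  · refine (isClique_insert_of_dominated hdom hs hv).subset (Finset.coe_subset.mpr ?_)
    exact Finset.union_subset (Finset.subset_insert w s) (image_update_id_subset_insert s)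
  · rw [image_update_id_of_notMem hv, Finset.union_self]
    exact hs.1

lemma coe_image_update_id_subset (hw : w ∈ S) {s : Finset V} (hs : s ∈ cliqueFacesIn G S) :
    ((s.image (Function.update id v w) : Finset V) : Set V) ⊆ S := by
  refine (Finset.coe_subset.mpr (image_update_id_subset_insert s)).trans ?_
  rw [Finset.coe_insert]
  exact insert_subset hw hs.2

noncomputable def homotopyEquivOfDominated [Fintype V] (hw : w ∈ S) (hvw : v ≠ w)
    (hdom : closedNbhd G v ∩ S ⊆ closedNbhd G w) :
    ContinuousMap.HomotopyEquiv (faceRealization (cliqueFacesIn G S))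
      (faceRealization (cliqueFacesIn G (S \ {v}))) := by
  refine homotopyEquivOfVertexRetraction (Function.update id v w) ?_ ?_ ?_ ?_
  · exact fun s hs => ⟨hs.1, hs.2.trans sdiff_subset⟩
  · intro s hs
    refine ⟨(isClique_union_image_update_id hdom hs).subset ?_, fun u hu => ?_⟩
    · exact Finset.coe_subset.mpr Finset.subset_union_right
    · refine ⟨coe_image_update_id_subset hw hs hu, fun huv => ?_⟩
      exact notMem_image_update_id hvw s (huv ▸ hu)
  · intro s hs
    refine ⟨isClique_union_image_update_id hdom hs, ?_⟩
    rw [Finset.coe_union]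
    exact union_subset hs.2 (coe_image_update_id_subset hw hs)
  · intro s hs
    have hv : v ∉ s := fun hv => (hs.2 hv).2 rfl
    rwa [image_update_id_of_notMem hv, Finset.union_self]

end DominatedVertex

section Dismantling

variable {V : Type*} {G : SimpleGraph V}

lemma mem_closedNbhd_comap_val {p : V → Prop} {u v : Subtype p} :
    u ∈ closedNbhd (G.comap Subtype.val) v ↔ (u : V) ∈ closedNbhd G v := by
  simp [closedNbhd, Subtype.ext_iff]

lemma CopWin.exists_dominationOrder [Fintype V] (h : CopWin G) :
    ∃ (n : ℕ) (e : V ≃ Fin n), ∀ v, 0 < (e v : ℕ) →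
      ∃ w, e w < e v ∧ closedNbhd G v ∩ {u | e u ≤ e v} ⊆ closedNbhd G w := by
  obtain ⟨n, e, he⟩ := h
  refine ⟨n, e, fun v hv => ?_⟩
  obtain ⟨w, hwv, hsub⟩ := he v hv
  refine ⟨w, hwv, fun u ⟨huv, hu⟩ => ?_⟩
  have hmem : (⟨u, hu⟩ : {u // e u ≤ e v}) ∈
      closedNbhd (G.comap (Subtype.val : {u // e u ≤ e v} → V)) ⟨v, le_rfl⟩ :=
    mem_closedNbhd_comap_val.mpr huv
  exact mem_closedNbhd_comap_val.mp (hsub hmem)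

variable [DecidableEq V]

lemma faceRealization_cliqueFacesIn_singleton (a : V) :
    faceRealization (cliqueFacesIn G {a}) = {stdBasisVec a} := by
  ext x
  rw [mem_faceRealization, mem_singleton_iff]
  constructor
  · rintro ⟨s, ⟨-, hsa⟩, hx⟩
    rw [← Finset.coe_singleton, Finset.coe_subset, Finset.subset_singleton_iff] at hsa
    rcases hsa with rfl | rfl
    · simp at hx
    · simpa using hx
  · rintro rfl
    exact ⟨{a}, ⟨by simp, by simp⟩, by simp⟩

variable [Fintype V]

theorem contractibleSpace_cliqueFacesIn_le {n : ℕ} (e : V ≃ Fin n) (hn : 0 < n)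
    (hdom : ∀ v, 0 < (e v : ℕ) →
      ∃ w, e w < e v ∧ closedNbhd G v ∩ {u | e u ≤ e v} ⊆ closedNbhd G w) (k : ℕ) :
    ContractibleSpace (faceRealization (cliqueFacesIn G {u | (e u : ℕ) ≤ k})) := by
  induction k with
  | zero =>
    have hS : {u | (e u : ℕ) ≤ 0} = {e.symm ⟨0, hn⟩} := by
      ext u
      simp [Equiv.eq_symm_apply, Fin.ext_iff]
    rw [hS, faceRealization_cliqueFacesIn_singleton]
    exact (convex_singleton _).contractibleSpace (singleton_nonempty _)
  | succ k ih =>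
    by_cases hk : k + 1 < n
    · set v := e.symm ⟨k + 1, hk⟩
      have hev : (e v : ℕ) = k + 1 := by simp [v]
      obtain ⟨w, hwv, hw⟩ := hdom v (by omega)
      rw [Fin.lt_def, hev] at hwv
      have hvw : v ≠ w := by
        rintro rfl
        omega
      have hwS : w ∈ {u | (e u : ℕ) ≤ k + 1} := hwv.le
      have hle : {u | e u ≤ e v} = {u | (e u : ℕ) ≤ k + 1} := by
        simp only [Fin.le_def, hev]
      rw [hle] at hw
      have hS : {u | (e u : ℕ) ≤ k + 1} \ {v} = {u | (e u : ℕ) ≤ k} := by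
        ext u
        simp only [mem_sdiff, mem_ofPred_eq, mem_singleton_iff, ← e.injective.eq_iff, Fin.ext_iff,
          hev]
        omega
      rw [← hS] at ih
      exact (homotopyEquivOfDominated hwS hvw hw).contractibleSpace
    · have hS : {u | (e u : ℕ) ≤ k + 1} = {u | (e u : ℕ) ≤ k} := by
        ext u
        have := (e u).isLt
        simp only [mem_ofPred_eq]
        omega
      rwa [hS]

end Dismantling

/-- Every cop-win finite simple graph has a contractible clique complex. -/
theorem stmt_2 {V : Type*} [Fintype V] [DecidableEq V] [Nonempty V] (G : SimpleGraph V)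
    (h : CopWin G) : ContractibleSpace ↥(cliqueRealization G) := by
  obtain ⟨n, e, hdom⟩ := h.exists_dominationOrder
  have hS : {u | (e u : ℕ) ≤ n} = univ := eq_univ_of_forall fun u => (e u).isLt.le
  have hfaces : cliqueFacesIn G univ = {s : Finset V | G.IsClique (s : Set V)} := by
    simp [cliqueFacesIn]
  have := contractibleSpace_cliqueFacesIn_le e (e (Classical.arbitrary V)).pos hdom n
  rwa [hS, hfaces] at this
end

section
/- For every λ ≥ 1 there exists δ > 0 such that for all r > 0 and all x, y ∈ ℝ^d with r ≤ ‖x−y‖ ≤ λr, there exists a point z on the segment [x,y] such that the open ball B(z, δr) is contained in W(x,y,r) = {z ∈ B(y, ‖y−x‖) : B(z,r) ⊇ B(x,r) ∩ B(y, ‖y−x‖)}. -/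
open Metric

/-- `W(x,y,r)`: the set of points `z` of the open ball `B(y, ‖y-x‖)` such that
`B(z,r) ⊇ B(x,r) ∩ B(y, ‖y-x‖)`. -/
def W {d : ℕ} (x y : EuclideanSpace ℝ (Fin d)) (r : ℝ) : Set (EuclideanSpace ℝ (Fin d)) :=
  {z | z ∈ ball y (dist y x) ∧ ball x r ∩ ball y (dist y x) ⊆ ball z r}

/-
Put `z` on `[x, y]` at the fraction `t = 1/(2λ²)` from `x`. Stewart's identity
`‖w - z‖² = (1-t)‖w-x‖² + t‖w-y‖² - t(1-t)‖x-y‖²` shows that every `w ∈ B(x,r) ∩ B(y,‖x-y‖)`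
satisfies `‖w - z‖² < (1-t)r² + t²λ²r² = (1 - t/2)r² ≤ ((1 - t/4)r)²`, while `‖z - y‖ = (1-t)‖x-y‖`.
Hence `δ = t/4` works by the triangle inequality.
-/

open AffineMap

section InnerProductSpace

variable {E : Type*} [NormedAddCommGroup E] [InnerProductSpace ℝ E]

theorem dist_lineMap_sq (x y w : E) (t : ℝ) :
    dist w (lineMap x y t) ^ 2 =
      (1 - t) * dist w x ^ 2 + t * dist w y ^ 2 - t * (1 - t) * dist x y ^ 2 := by
  have hz : w - lineMap x y t = (w - x) - t • (y - x) := by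
    rw [lineMap_apply_module']; abel
  have hy : w - y = (w - x) - (y - x) := by abel
  simp only [dist_eq_norm, hz, hy, norm_sub_rev x y, norm_sub_sq_real (w - x), norm_smul,
    real_inner_smul_right, Real.norm_eq_abs, mul_pow, sq_abs]
  ring

theorem sq_dist_lineMap_lt {x y w : E} {r t : ℝ} (ht₀ : 0 < t) (ht₁ : t ≤ 1)
    (hw : w ∈ ball x r ∩ ball y (dist x y)) :
    dist w (lineMap x y t) ^ 2 < (1 - t) * r ^ 2 + t ^ 2 * dist x y ^ 2 := by
  obtain ⟨hwx, hwy⟩ := hw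
  rw [mem_ball] at hwx hwy
  have hx : dist w x ^ 2 < r ^ 2 := pow_lt_pow_left₀ hwx dist_nonneg two_ne_zero
  have hy : dist w y ^ 2 < dist x y ^ 2 := pow_lt_pow_left₀ hwy dist_nonneg two_ne_zero
  rw [dist_lineMap_sq]
  nlinarith [mul_le_mul_of_nonneg_left hx.le (sub_nonneg.2 ht₁), mul_lt_mul_of_pos_left hy ht₀]

end InnerProductSpace

theorem ball_subset_W {d : ℕ} {x y z : EuclideanSpace ℝ (Fin d)} {r ρ : ℝ}
    (hy : dist z y + ρ ≤ dist y x) (hx : ball x r ∩ ball y (dist y x) ⊆ closedBall z (r - ρ)) :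
    ball z ρ ⊆ W x y r := by
  intro z' hz'
  rw [mem_ball'] at hz'
  refine ⟨?_, fun w hw ↦ ?_⟩
  · rw [mem_ball]
    linarith [dist_triangle z' z y, dist_comm z z']
  · have hwz := mem_closedBall.1 (hx hw)
    rw [mem_ball]
    linarith [dist_triangle w z z']

theorem stmt_3 (d : ℕ) (lam : ℝ) (hlam : 1 ≤ lam) :
    ∃ δ > (0 : ℝ), ∀ r > (0 : ℝ), ∀ x y : EuclideanSpace ℝ (Fin d),
      r ≤ dist x y → dist x y ≤ lam * r →
      ∃ z ∈ segment ℝ x y, ball z (δ * r) ⊆ W x y r := by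
  set t : ℝ := 1 / (2 * lam ^ 2)
  have ht₀ : 0 < t := by positivity
  have htlam : t * lam ^ 2 = 1 / 2 := by simp only [t]; field_simp
  have ht₁ : t ≤ 1 / 2 := by nlinarith [one_le_pow₀ (n := 2) hlam]
  refine ⟨t / 4, by positivity, fun r hr x y hrD hDr ↦ ⟨lineMap x y t, ?_, ball_subset_W ?_ ?_⟩⟩
  · rw [segment_eq_image_lineMap]
    exact ⟨t, ⟨ht₀.le, by linarith⟩, rfl⟩
  · rw [dist_lineMap_right, Real.norm_of_nonneg (by linarith), dist_comm y x]
    nlinarith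
  · intro w hw
    rw [dist_comm y x] at hw
    have htD : t ^ 2 * dist x y ^ 2 ≤ t / 2 * r ^ 2 := by
      calc t ^ 2 * dist x y ^ 2 ≤ t ^ 2 * (lam * r) ^ 2 := by gcongr
        _ = t / 2 * r ^ 2 := by linear_combination (t * r ^ 2) * htlam
    have hsq : dist w (lineMap x y t) ^ 2 < (r - t / 4 * r) ^ 2 := by
      nlinarith [sq_dist_lineMap_lt ht₀ (by linarith) hw]
    exact mem_closedBall.2 (lt_of_pow_lt_pow_left₀ 2 (by nlinarith) hsq).le
end

section
/- Let d ≥ 1, λ ≥ 1, r = 1, x = 0 ∈ ℝ^d, and y = (y₁, 0, ..., 0) with 1 ≤ y₁ ≤ λ. Set z = (1/(10λ), 0, ..., 0). Then every point u in B(x,1) ∩ B(y, ‖y‖) satisfies ‖u − z‖² < 1 − 1/(100λ²). -/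
open Metric

/-! With `a = 1 / (10λ)` and `y = t e`, `t ≤ λ`, the condition `‖u - y‖ < ‖y‖` says
`‖u‖² < 2⟪u, y⟫ ≤ 2λ⟪u, e⟫`. Since `a λ = 1/10`, expanding the square gives
`‖u - a e‖² < (1 - 10a²)‖u‖² + a² ≤ 1 - 9a²`, so no case distinction on `u₁` is needed. -/

section InnerProductSpace

variable {E : Type*} [NormedAddCommGroup E] [InnerProductSpace ℝ E]

theorem norm_sq_lt_two_mul_inner_of_norm_sub_lt_norm {u y : E} (h : ‖u - y‖ < ‖y‖) :
    ‖u‖ ^ 2 < 2 * inner ℝ u y := by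
  have hsq : ‖u - y‖ ^ 2 < ‖y‖ ^ 2 := by gcongr
  rw [norm_sub_sq_real] at hsq
  linarith

theorem norm_sub_smul_sq_lt_of_mem_ball_inter_ball {e u : E} {t lam : ℝ} (he : ‖e‖ = 1)
    (ht : 0 < t) (htlam : t ≤ lam) (hlam : 1 ≤ lam) (hu : ‖u‖ < 1) (hut : ‖u - t • e‖ < t) :
    ‖u - (1 / (10 * lam)) • e‖ ^ 2 < 1 - 1 / (100 * lam ^ 2) := by
  have hte : ‖t • e‖ = t := by rw [norm_smul, he, Real.norm_of_nonneg ht.le, mul_one]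
  have hinner : ‖u‖ ^ 2 < 2 * t * inner ℝ u e := by
    have := norm_sq_lt_two_mul_inner_of_norm_sub_lt_norm (u := u) (y := t • e) (by rwa [hte])
    rwa [inner_smul_right, ← mul_assoc] at this
  have hinner_nonneg : 0 ≤ inner ℝ u e := by nlinarith [sq_nonneg ‖u‖]
  have hinner_lam : ‖u‖ ^ 2 < 2 * lam * inner ℝ u e :=
    hinner.trans_le (by gcongr)
  have hu_sq : ‖u‖ ^ 2 < 1 := pow_lt_one₀ (norm_nonneg u) hu two_ne_zero
  set a := 1 / (10 * lam) with ha
  have ha_pos : 0 < a := by positivity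
  have ha_lam : a * lam = 1 / 10 := by rw [ha]; field_simp
  have ha_sq : 1 / (100 * lam ^ 2) = a ^ 2 := by rw [ha]; field_simp; norm_num
  have ha_sq_le : 10 * a ^ 2 ≤ 1 := by nlinarith
  have hkey : 10 * a ^ 2 * ‖u‖ ^ 2 < 2 * a * inner ℝ u e :=
    calc 10 * a ^ 2 * ‖u‖ ^ 2 < 10 * a ^ 2 * (2 * lam * inner ℝ u e) := by gcongr
      _ = 2 * a * inner ℝ u e := by linear_combination (20 * a * inner ℝ u e) * ha_lam
  rw [norm_sub_sq_real, inner_smul_right, norm_smul, he, mul_one, Real.norm_of_nonneg ha_pos.le,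
    ha_sq]
  calc ‖u‖ ^ 2 - 2 * (a * inner ℝ u e) + a ^ 2
      < (1 - 10 * a ^ 2) * ‖u‖ ^ 2 + a ^ 2 := by linarith
    _ ≤ (1 - 10 * a ^ 2) * 1 + a ^ 2 := by gcongr
    _ ≤ 1 - a ^ 2 := by linarith [sq_nonneg a]

end InnerProductSpace

theorem stmt_4 (d : ℕ) (hd : 0 < d) (lam y₁ : ℝ) (hlam : 1 ≤ lam)
    (hy₁ : 1 ≤ y₁) (hy₁' : y₁ ≤ lam)
    (y z : EuclideanSpace ℝ (Fin d))
    (hy : y = EuclideanSpace.single (⟨0, hd⟩ : Fin d) y₁)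
    (hz : z = EuclideanSpace.single (⟨0, hd⟩ : Fin d) (1 / (10 * lam)))
    (u : EuclideanSpace ℝ (Fin d))
    (hu : u ∈ ball (0 : EuclideanSpace ℝ (Fin d)) 1 ∩ ball y ‖y‖) :
    ‖u - z‖ ^ 2 < 1 - 1 / (100 * lam ^ 2) := by
  set e := EuclideanSpace.single (⟨0, hd⟩ : Fin d) (1 : ℝ)
  have he : ‖e‖ = 1 := by simp [e]
  have single_eq_smul (c : ℝ) : EuclideanSpace.single (⟨0, hd⟩ : Fin d) c = c • e := by
    ext j
    by_cases hj : j = ⟨0, hd⟩ <;> simp [e, hj]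
  obtain ⟨hu₁, hu₂⟩ := hu
  rw [mem_ball_zero_iff] at hu₁
  rw [mem_ball_iff_norm, hy, single_eq_smul, norm_smul, he, mul_one,
    Real.norm_of_nonneg (by linarith)] at hu₂
  rw [hz, single_eq_smul]
  exact norm_sub_smul_sq_lt_of_mem_ball_inter_ball he (by linarith) hy₁' hlam hu₁ hu₂
end

section
/- Let K ⊆ ℝ^d be a convex body and ν a probability measure with density f supported on K with ν_min := inf_{x∈K} f(x) > 0. There is a constant δ = δ(K, ν) such that if r_n ≥ δ(ln n / n)^{1/d}, and X₁, ..., X_n are i.i.d. samples from ν, then with probability tending to 1 as n → ∞, K ⊆ ⋃_{i=1}^n B(X_i, r_n). -/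
/-!
If `B(x₀, ρ) ⊆ K`, convexity puts the homothetic copy of `B(x₀, ρ)` with centre `z ∈ K` and
ratio `t ∈ (0, 1]` inside `K ∩ B(z, t · diam K)`, so every ball of radius `s ≤ s₀` centred in `K`
has `ν`-mass at least `c sᵈ`. Consequently a maximal `r/2`-separated subset of `K` is a finite
net of at most `(c (r/4)ᵈ)⁻¹` points, and `K` is covered by the balls `B(Xᵢ, r)` as soon as each
ball `B(y, r/2)` around a net point contains a sample. By independence and a union bound this
fails with probability at most `(c (r/4)ᵈ)⁻¹ (1 - c (r/4)ᵈ)ⁿ`, which is `O(1/n)` once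
`c (r/4)ᵈ ≥ 2 log n / n`, i.e. once `r ≥ 4 (2/c)^{1/d} (log n / n)^{1/d}`.
-/

open Metric MeasureTheory Filter

open scoped ENNReal NNReal

section Geometry

variable {E : Type*} [NormedAddCommGroup E] [NormedSpace ℝ E] [MeasurableSpace E] [BorelSpace E]
  [FiniteDimensional ℝ E] (μ : Measure E) [μ.IsAddHaarMeasure]

open Module in
theorem Convex.exists_pow_le_measure_inter_ball {K : Set E} (hconv : Convex ℝ K)
    (hbdd : Bornology.IsBounded K) (hint : (interior K).Nonempty) :
    ∃ c > 0, ∃ s₀ > 0, ∀ z ∈ K, ∀ s > 0,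
      ENNReal.ofReal (c * min s s₀ ^ finrank ℝ E) ≤ μ (K ∩ ball z s) := by
  obtain ⟨x₀, hx₀⟩ := hint
  obtain ⟨ρ, hρ, hball⟩ : ∃ ρ > 0, ball x₀ ρ ⊆ K :=
    let ⟨ρ, hρ, h⟩ := Metric.isOpen_iff.1 isOpen_interior x₀ hx₀
    ⟨ρ, hρ, h.trans interior_subset⟩
  obtain ⟨D, hD, hdiam⟩ : ∃ D > 0, ∀ z ∈ K, ∀ w ∈ K, dist z w < D := by
    obtain ⟨C, hC⟩ := Metric.isBounded_iff.1 hbdd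
    exact ⟨max C 0 + 1, by positivity,
      fun z hz w hw => (hC hz hw).trans_lt (by linarith [le_max_left C 0])⟩
  obtain ⟨b, hb, hμb⟩ : ∃ b : ℝ, 0 < b ∧ μ (ball x₀ ρ) = ENNReal.ofReal b :=
    ⟨_, ENNReal.toReal_pos (measure_ball_pos μ x₀ hρ).ne' measure_ball_lt_top.ne,
      (ENNReal.ofReal_toReal measure_ball_lt_top.ne).symm⟩
  refine ⟨b / D ^ finrank ℝ E, by positivity, D, hD, fun z hz s hs => ?_⟩
  set t := min s D / D
  have ht₀ : 0 < t := by positivity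
  have ht₁ : t ≤ 1 := div_le_one_of_le₀ (min_le_right s D) hD.le
  have hsub : AffineMap.homothety z t '' ball x₀ ρ ⊆ K ∩ ball z s := by
    rintro _ ⟨w, hw, rfl⟩
    refine ⟨?_, ?_⟩
    · rw [AffineMap.homothety_apply, vsub_eq_sub, vadd_eq_add, add_comm]
      exact hconv.add_smul_sub_mem hz (hball hw) ⟨ht₀.le, ht₁⟩
    · rw [mem_ball, dist_homothety_center, Real.norm_of_nonneg ht₀.le]
      calc t * dist z w < t * D := by gcongr; exact hdiam z hz w (hball hw)
        _ = min s D := div_mul_cancel₀ _ hD.ne'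
        _ ≤ s := min_le_left s D
  calc ENNReal.ofReal (b / D ^ finrank ℝ E * min s D ^ finrank ℝ E)
      = ENNReal.ofReal |t ^ finrank ℝ E| * μ (ball x₀ ρ) := by
        rw [abs_of_pos (by positivity), hμb, ← ENNReal.ofReal_mul (by positivity), div_pow]
        ring_nf
    _ = μ (AffineMap.homothety z t '' ball x₀ ρ) :=
        (Measure.addHaar_image_homothety μ _ _ _).symm
    _ ≤ μ (K ∩ ball z s) := measure_mono hsub

theorem MeasureTheory.Measure.mul_measure_inter_le_withDensity_apply {α : Type*}
    [MeasurableSpace α] (μ : Measure α) {f : α → ℝ≥0∞} {K A : Set α} {m : ℝ≥0∞}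
    (hK : MeasurableSet K) (hA : MeasurableSet A) (hf : ∀ x ∈ K, m ≤ f x) :
    m * μ (K ∩ A) ≤ μ.withDensity f A := by
  rw [withDensity_apply f hA, ← setLIntegral_const]
  calc ∫⁻ _ in K ∩ A, m ∂μ ≤ ∫⁻ x in K ∩ A, f x ∂μ :=
        setLIntegral_mono' (hK.inter hA) fun x hx => hf x hx.1
    _ ≤ ∫⁻ x in A, f x ∂μ := lintegral_mono_set Set.inter_subset_right

open Module in
theorem Convex.exists_pow_le_withDensity_ball {K : Set E} (hconv : Convex ℝ K)
    (hcomp : IsCompact K) (hint : (interior K).Nonempty) {f : E → ℝ≥0∞} {m : ℝ≥0∞}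
    (hm : 0 < m) (hf : ∀ x ∈ K, m ≤ f x) :
    ∃ c > 0, ∃ s₀ > 0, ∀ z ∈ K, ∀ s > 0,
      ENNReal.ofReal (c * min s s₀ ^ finrank ℝ E) ≤ μ.withDensity f (ball z s) := by
  obtain ⟨c, hc, s₀, hs₀, hvol⟩ :=
    hconv.exists_pow_le_measure_inter_ball μ hcomp.isBounded hint
  obtain ⟨a, ha, ham⟩ : ∃ a : ℝ, 0 < a ∧ ENNReal.ofReal a ≤ m := by
    obtain ⟨a, -, ha, ham⟩ := ENNReal.lt_iff_exists_real_btwn.1 hm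
    exact ⟨a, ENNReal.ofReal_pos.1 ha, ham.le⟩
  refine ⟨a * c, by positivity, s₀, hs₀, fun z hz s hs => ?_⟩
  calc ENNReal.ofReal (a * c * min s s₀ ^ finrank ℝ E)
      = ENNReal.ofReal a * ENNReal.ofReal (c * min s s₀ ^ finrank ℝ E) := by
        rw [mul_assoc, ENNReal.ofReal_mul ha.le]
    _ ≤ m * μ (K ∩ ball z s) := mul_le_mul' ham (hvol z hz s hs)
    _ ≤ μ.withDensity f (ball z s) :=
        μ.mul_measure_inter_le_withDensity_apply hcomp.isClosed.measurableSet measurableSet_ball hf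

end Geometry

section Packing

variable {X : Type*} [PseudoMetricSpace X] [MeasurableSpace X] [OpensMeasurableSpace X]
  {ν : Measure X} {ε : ℝ≥0} {q : ℝ≥0∞}

theorem Metric.IsSeparated.card_mul_le_measure_univ {C : Finset X}
    (hC : IsSeparated (2 * ε : ℝ≥0) (C : Set X)) (hq : ∀ y ∈ C, q ≤ ν (ball y ε)) :
    C.card * q ≤ ν Set.univ := by
  have hdisj : (C : Set X).PairwiseDisjoint fun y => ball y ε := by
    intro y hy y' hy' hne
    refine Set.disjoint_left.2 fun z hz hz' => (hC hy hy' hne).not_ge ?_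
    rw [← ENNReal.ofReal_coe_nnreal, NNReal.coe_mul, NNReal.coe_two]
    refine (edist_lt_ofReal.2 ?_).le
    linarith [dist_triangle y z y', mem_ball'.1 hz, mem_ball.1 hz']
  calc C.card * q = ∑ _y ∈ C, q := by rw [Finset.sum_const, nsmul_eq_mul]
    _ ≤ ∑ y ∈ C, ν (ball y ε) := Finset.sum_le_sum hq
    _ = ν (⋃ y ∈ C, ball y ε) :=
        (measure_biUnion_finset hdisj fun _ _ => measurableSet_ball).symm
    _ ≤ ν Set.univ := measure_mono (Set.subset_univ _)

theorem Metric.packingNumber_ne_top_of_le_measure_ball [IsFiniteMeasure ν] {A : Set X}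
    (hq : q ≠ 0) (hA : ∀ y ∈ A, q ≤ ν (ball y ε)) : packingNumber (2 * ε) A ≠ ⊤ := by
  obtain ⟨N, hN⟩ := ENNReal.exists_nat_mul_gt hq (measure_ne_top ν Set.univ)
  refine ne_top_of_le_ne_top (ENat.natCast_ne_top N) (iSup₂_le fun C hCA => iSup_le fun hC => ?_)
  by_contra! hlt
  obtain ⟨t, htC, ht⟩ := Set.exists_subset_encard_eq (Order.add_one_le_of_lt hlt)
  have htfin : t.Finite := Set.finite_of_encard_eq_coe ht
  have hcard : htfin.toFinset.card = N + 1 := by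
    rw [htfin.encard_eq_coe_toFinset_card] at ht
    exact_mod_cast ht
  have := IsSeparated.card_mul_le_measure_univ (ν := ν) (C := htfin.toFinset)
    (by simpa using hC.subset htC) fun y hy => hA y (hCA (htC (by simpa using hy)))
  rw [hcard] at this
  exact hN.not_ge (le_trans (by gcongr; exact_mod_cast N.le_succ) this)

theorem Metric.exists_finset_subset_iUnion_closedBall [IsFiniteMeasure ν] {A : Set X}
    (hq : q ≠ 0) (hA : ∀ y ∈ A, q ≤ ν (ball y ε)) :
    ∃ S : Finset X, ↑S ⊆ A ∧ A ⊆ ⋃ y ∈ S, closedBall y (2 * ε) ∧ S.card * q ≤ ν Set.univ := by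
  have htop := packingNumber_ne_top_of_le_measure_ball hq hA
  have hfin : (maximalSeparatedSet (2 * ε) A).Finite :=
    Set.encard_ne_top_iff.1 (encard_maximalSeparatedSet htop ▸ htop)
  refine ⟨hfin.toFinset, by simpa using maximalSeparatedSet_subset, ?_, ?_⟩
  · simpa using isCover_iff_subset_iUnion_closedBall.1 (isCover_maximalSeparatedSet htop)
  · exact IsSeparated.card_mul_le_measure_univ
      (by rw [hfin.coe_toFinset]; exact isSeparated_maximalSeparatedSet)
      fun y hy => hA y (maximalSeparatedSet_subset (by simpa using hy))

end Packing

section Sampling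

open ProbabilityTheory

variable {Ω X : Type*} [MeasurableSpace Ω] {P : Measure Ω} [MeasurableSpace X] {ν : Measure X}

theorem ProbabilityTheory.iIndepFun.measure_biInter_preimage_eq_pow {ι : Type*}
    {Y : ι → Ω → X} (hindep : iIndepFun Y P)
    (hY : ∀ i, Measurable (Y i)) (hmap : ∀ i, P.map (Y i) = ν) {B : Set X}
    (hB : MeasurableSet B) (s : Finset ι) :
    P (⋂ i ∈ s, Y i ⁻¹' B) = ν B ^ s.card := by
  rw [hindep.meas_biInter fun i _ => ⟨B, hB, rfl⟩]
  simp_rw [← Measure.map_apply (hY _) hB, hmap]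
  exact Finset.prod_const _

variable [PseudoMetricSpace X] [OpensMeasurableSpace X] [IsProbabilityMeasure P]
  [IsProbabilityMeasure ν] {Y : ℕ → Ω → X}

theorem one_sub_card_mul_pow_le_measure_subset_iUnion_ball (hindep : iIndepFun Y P)
    (hY : ∀ i, Measurable (Y i)) (hmap : ∀ i, P.map (Y i) = ν) {A : Set X} {S : Finset X}
    {ε : ℝ} (hS : A ⊆ ⋃ y ∈ S, closedBall y ε) {q : ℝ≥0∞} (hq : ∀ y ∈ S, q ≤ ν (ball y ε))
    (n : ℕ) :
    1 - S.card * (1 - q) ^ n ≤ P {ω | A ⊆ ⋃ i ∈ Finset.range n, ball (Y i ω) (2 * ε)} := by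
  set G := ⋂ y ∈ S, ⋃ i ∈ Finset.range n, Y i ⁻¹' ball y ε
  have hGmeas : MeasurableSet G := Finset.measurableSet_biInter _ fun _ _ =>
    Finset.measurableSet_biUnion _ fun i _ => hY i measurableSet_ball
  have hGsub : G ⊆ {ω | A ⊆ ⋃ i ∈ Finset.range n, ball (Y i ω) (2 * ε)} := by
    intro ω hω x hx
    obtain ⟨y, hy, hxy⟩ := Set.mem_iUnion₂.1 (hS hx)
    obtain ⟨i, hi, hYi⟩ := Set.mem_iUnion₂.1 (Set.mem_iInter₂.1 hω y hy)
    refine Set.mem_iUnion₂.2 ⟨i, hi, mem_ball.2 ?_⟩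
    linarith [dist_triangle x y (Y i ω), mem_closedBall.1 hxy, mem_ball'.1 hYi]
  have hmiss : ∀ y ∈ S, P (⋃ i ∈ Finset.range n, Y i ⁻¹' ball y ε)ᶜ ≤ (1 - q) ^ n := by
    intro y hy
    simp_rw [Set.compl_iUnion₂, ← Set.preimage_compl]
    rw [hindep.measure_biInter_preimage_eq_pow hY hmap measurableSet_ball.compl,
      Finset.card_range, prob_compl_eq_one_sub measurableSet_ball]
    gcongr
    exact hq y hy
  calc 1 - S.card * (1 - q) ^ n
      ≤ 1 - ∑ y ∈ S, P (⋃ i ∈ Finset.range n, Y i ⁻¹' ball y ε)ᶜ := by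
        gcongr
        simpa using Finset.sum_le_sum hmiss
    _ ≤ 1 - P Gᶜ := by
        gcongr
        rw [Set.compl_iInter₂]
        exact measure_biUnion_finset_le _ _
    _ = P G := by rw [← prob_compl_eq_one_sub hGmeas.compl, compl_compl]
    _ ≤ _ := measure_mono hGsub

theorem one_sub_inv_mul_pow_le_measure_subset_iUnion_ball (hindep : iIndepFun Y P)
    (hY : ∀ i, Measurable (Y i)) (hmap : ∀ i, P.map (Y i) = ν) {A : Set X} {ε : ℝ≥0}
    {q : ℝ≥0∞} (hq : q ≠ 0) (hA : ∀ z ∈ A, q ≤ ν (ball z ε)) (n : ℕ) :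
    1 - q⁻¹ * (1 - q) ^ n ≤ P {ω | A ⊆ ⋃ i ∈ Finset.range n, ball (Y i ω) (4 * ε)} := by
  obtain ⟨S, hSA, hAS, hSq⟩ := exists_finset_subset_iUnion_closedBall hq hA
  have hcard : (S.card : ℝ≥0∞) ≤ q⁻¹ :=
    ENNReal.le_inv_iff_mul_le.2 (hSq.trans_eq measure_univ)
  have hS : ∀ y ∈ S, q ≤ ν (ball y (2 * ε)) := fun y hy =>
    (hA y (hSA hy)).trans (measure_mono (ball_subset_ball (by linarith [ε.2])))
  have hradius : (2 : ℝ) * (2 * ε) = 4 * ε := by ring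
  calc 1 - q⁻¹ * (1 - q) ^ n ≤ 1 - S.card * (1 - q) ^ n := by gcongr
    _ ≤ P {ω | A ⊆ ⋃ i ∈ Finset.range n, ball (Y i ω) (2 * (2 * ε))} :=
        one_sub_card_mul_pow_le_measure_subset_iUnion_ball hindep hY hmap hAS hS n
    _ = _ := by rw [hradius]

end Sampling

theorem Real.inv_mul_exp_neg_mul_le_inv {n : ℕ} (hn : 2 ≤ n) {q : ℝ}
    (hq : 2 * Real.log n / n ≤ q) : q⁻¹ * Real.exp (-(n * q)) ≤ (n : ℝ)⁻¹ := by
  have hn' : (2 : ℝ) ≤ n := by exact_mod_cast hn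
  have hlog : 1 / 2 ≤ Real.log n := by
    linarith [Real.log_two_gt_d9, Real.log_le_log two_pos hn']
  have hqinv : q⁻¹ ≤ n := by
    refine inv_le_of_inv_le₀ (by positivity) ?_
    calc (n : ℝ)⁻¹ ≤ 2 * Real.log n / n := by rw [inv_eq_one_div]; gcongr; linarith
      _ ≤ q := hq
  have hexp : Real.exp (-(n * q)) ≤ ((n : ℝ) ^ 2)⁻¹ := by
    rw [← Real.exp_log (by positivity : (0 : ℝ) < n ^ 2), ← Real.exp_neg, Real.log_pow,
      Real.exp_le_exp]
    rw [div_le_iff₀ (by positivity)] at hq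
    push_cast
    linarith
  calc q⁻¹ * Real.exp (-(n * q)) ≤ n * ((n : ℝ) ^ 2)⁻¹ := by gcongr
    _ = (n : ℝ)⁻¹ := by field_simp

theorem ENNReal.inv_ofReal_mul_one_sub_ofReal_pow_le {n : ℕ} (hn : 2 ≤ n) {q : ℝ}
    (hq : 2 * Real.log n / n ≤ q) :
    (ENNReal.ofReal q)⁻¹ * (1 - ENNReal.ofReal q) ^ n ≤ (n : ℝ≥0∞)⁻¹ := by
  have hq0 : 0 < q :=
    lt_of_lt_of_le (by have := Real.log_pos (by exact_mod_cast hn : (1 : ℝ) < n); positivity) hq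
  have hstep : 1 - ENNReal.ofReal q ≤ ENNReal.ofReal (Real.exp (-q)) := by
    rw [tsub_le_iff_right, ← ENNReal.ofReal_add (Real.exp_nonneg _) hq0.le,
      ← ENNReal.ofReal_one]
    exact ENNReal.ofReal_le_ofReal (by linarith [Real.add_one_le_exp (-q)])
  calc (ENNReal.ofReal q)⁻¹ * (1 - ENNReal.ofReal q) ^ n
      ≤ ENNReal.ofReal q⁻¹ * ENNReal.ofReal (Real.exp (-q)) ^ n := by
        rw [ENNReal.ofReal_inv_of_pos hq0]; gcongr
    _ = ENNReal.ofReal (q⁻¹ * Real.exp (-(n * q))) := by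
        rw [← ENNReal.ofReal_pow (Real.exp_nonneg _), ← Real.exp_nat_mul,
          ← ENNReal.ofReal_mul (inv_nonneg.2 hq0.le), mul_neg]
    _ ≤ ENNReal.ofReal (n : ℝ)⁻¹ :=
        ENNReal.ofReal_le_ofReal (Real.inv_mul_exp_neg_mul_le_inv hn hq)
    _ = (n : ℝ≥0∞)⁻¹ := by
        rw [ENNReal.ofReal_inv_of_pos (by positivity), ENNReal.ofReal_natCast]

theorem eventually_two_mul_log_div_le {d : ℕ} (hd : 0 < d) {c s₀ : ℝ} (hc : 0 < c)
    (hs₀ : 0 < s₀) {r : ℕ → ℝ}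
    (hr : ∀ n : ℕ, 4 * (2 / c) ^ ((1 : ℝ) / d) * (Real.log n / n) ^ ((1 : ℝ) / d) ≤ r n) :
    ∀ᶠ n : ℕ in atTop, 0 < r n ∧ 2 * Real.log n / n ≤ c * min (r n / 4) s₀ ^ d := by
  have hlim :
      Tendsto (fun n : ℕ => (2 / c * (Real.log n / n)) ^ ((1 : ℝ) / d)) atTop (nhds 0) := by
    have hlog : Tendsto (fun n : ℕ => Real.log n / n) atTop (nhds 0) :=
      Real.isLittleO_log_id_atTop.tendsto_div_nhds_zero.comp tendsto_natCast_atTop_atTop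
    have h := (Real.continuousAt_rpow_const 0 ((1 : ℝ) / d) (.inr (by positivity))).tendsto.comp
      (by simpa using hlog.const_mul (2 / c))
    rwa [Real.zero_rpow (by positivity)] at h
  filter_upwards [hlim.eventually (gt_mem_nhds hs₀), eventually_ge_atTop 2] with n hsmall hn
  have hlogn : 0 < Real.log n / n :=
    div_pos (Real.log_pos (by exact_mod_cast hn)) (by positivity)
  set b := (2 / c * (Real.log n / n)) ^ ((1 : ℝ) / d)
  have hb : 0 < b := by positivity
  have hrb : 4 * b ≤ r n := by
    have := hr n
    rwa [mul_assoc, ← Real.mul_rpow (by positivity) hlogn.le] at this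
  have hbpow : c * b ^ d = 2 * Real.log n / n := by
    show c * ((2 / c * (Real.log n / n)) ^ ((1 : ℝ) / d)) ^ d = _
    rw [one_div, Real.rpow_inv_natCast_pow (by positivity) hd.ne']
    field_simp
  refine ⟨by linarith, ?_⟩
  calc 2 * Real.log n / n = c * b ^ d := hbpow.symm
    _ ≤ c * min (r n / 4) s₀ ^ d := by gcongr; exact le_min (by linarith) hsmall.le

theorem stmt_9_general (d : ℕ) (hd : 0 < d) (K : Set (EuclideanSpace ℝ (Fin d)))
    (hKconv : Convex ℝ K) (hKcomp : IsCompact K) (hKint : (interior K).Nonempty)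
    (f : EuclideanSpace ℝ (Fin d) → ENNReal)
    (ν : Measure (EuclideanSpace ℝ (Fin d))) (hν : ν = volume.withDensity f)
    (hprob : IsProbabilityMeasure ν)
    (νmin : ENNReal) (hνmin : 0 < νmin) (hlow : ∀ x ∈ K, νmin ≤ f x) :
    ∃ δ : ℝ, 0 < δ ∧
      ∀ (Ω : Type) (mΩ : MeasurableSpace Ω) (P : Measure Ω), IsProbabilityMeasure P →
      ∀ X : ℕ → Ω → EuclideanSpace ℝ (Fin d), (∀ i, Measurable (X i)) →
      ProbabilityTheory.iIndepFun X P →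
      (∀ i, Measure.map (X i) P = ν) →
      ∀ r : ℕ → ℝ, (∀ n : ℕ, δ * (Real.log n / n) ^ ((1 : ℝ) / d) ≤ r n) →
      Tendsto (fun n : ℕ => P {ω | K ⊆ ⋃ i ∈ Finset.range n, ball (X i ω) (r n)})
        atTop (nhds 1) := by
  obtain ⟨c, hc, s₀, hs₀, hmass⟩ :=
    hKconv.exists_pow_le_withDensity_ball volume hKcomp hKint hνmin hlow
  rw [finrank_euclideanSpace_fin, ← hν] at hmass
  refine ⟨4 * (2 / c) ^ ((1 : ℝ) / d), by positivity, fun Ω _ P _ X hX hindep hmap r hr => ?_⟩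
  have hcover : ∀ᶠ n : ℕ in atTop,
      1 - (n : ℝ≥0∞)⁻¹ ≤ P {ω | K ⊆ ⋃ i ∈ Finset.range n, ball (X i ω) (r n)} := by
    filter_upwards [eventually_two_mul_log_div_le hd hc hs₀ hr, eventually_ge_atTop 2]
      with n ⟨hrn, hq⟩ hn
    have hε : ((r n / 4).toNNReal : ℝ) = r n / 4 := Real.coe_toNNReal _ (by positivity)
    have hcov := one_sub_inv_mul_pow_le_measure_subset_iUnion_ball hindep hX hmap
      (q := ENNReal.ofReal (c * min (r n / 4) s₀ ^ d))
      (ENNReal.ofReal_pos.2 (mul_pos hc (pow_pos (lt_min (by positivity) hs₀) d))).ne'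
      (fun z hz => by rw [hε]; exact hmass z hz _ (by positivity)) n
    rw [hε, mul_div_cancel₀ _ four_ne_zero] at hcov
    exact (tsub_le_tsub_left (ENNReal.inv_ofReal_mul_one_sub_ofReal_pow_le hn hq) 1).trans hcov
  refine tendsto_of_tendsto_of_tendsto_of_le_of_le' ?_ tendsto_const_nhds hcover
    (.of_forall fun _ => prob_le_one)
  simpa using ENNReal.Tendsto.sub tendsto_const_nhds ENNReal.tendsto_inv_nat_nhds_zero
    (.inl ENNReal.one_ne_top)

/-- Covering lemma: for a convex body `K` and a probability measure with density uniformly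
positive on `K` (and vanishing outside `K`), there is a constant `δ` such that whenever
`r_n ≥ δ (ln n / n)^{1/d}`, the balls of radius `r_n` around `n` i.i.d. sample points a.a.s.
cover `K`. -/
theorem stmt_9 (d : ℕ) (hd : 0 < d) (K : Set (EuclideanSpace ℝ (Fin d)))
    (hKconv : Convex ℝ K) (hKcomp : IsCompact K) (hKint : (interior K).Nonempty)
    (f : EuclideanSpace ℝ (Fin d) → ENNReal) (hfmeas : Measurable f)
    (ν : Measure (EuclideanSpace ℝ (Fin d))) (hν : ν = volume.withDensity f)
    (hprob : IsProbabilityMeasure ν)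
    (hsupp : ∀ x, x ∉ K → f x = 0)
    (νmin : ENNReal) (hνmin : 0 < νmin) (hlow : ∀ x ∈ K, νmin ≤ f x) :
    ∃ δ : ℝ, 0 < δ ∧
      ∀ (Ω : Type) (mΩ : MeasurableSpace Ω) (P : Measure Ω), IsProbabilityMeasure P →
      ∀ X : ℕ → Ω → EuclideanSpace ℝ (Fin d), (∀ i, Measurable (X i)) →
      ProbabilityTheory.iIndepFun X P →
      (∀ i, Measure.map (X i) P = ν) →
      ∀ r : ℕ → ℝ, (∀ n : ℕ, δ * (Real.log n / n) ^ ((1 : ℝ) / d) ≤ r n) →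
      Tendsto (fun n : ℕ => P {ω | K ⊆ ⋃ i ∈ Finset.range n, ball (X i ω) (r n)})
        atTop (nhds 1) :=
  stmt_9_general d hd K hKconv hKcomp hKint f ν hν hprob νmin hνmin hlow
end

section
/- Let H be a finite graph whose vertices are points in ℝ^d with edges exactly between pairs at Euclidean distance at most r. Suppose x, y are vertices of H such that x is a vertex of H at maximum distance from y. Then every vertex z of H lying in W(x,y,r) = {z ∈ B(y, ‖y−x‖) : B(z,r) ⊇ B(x,r) ∩ B(y, ‖y−x‖)} satisfies N_H[x] ⊆ N_H[z]. -/
open Metric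

/-!
A vertex `v` with `‖v - x‖ ≤ r` and `‖v - y‖ ≤ ‖x - y‖` lies in the closed balls `B̄(x,r)` and
`B̄(y,‖y-x‖)`. Their interiors meet (near `x` on the segment from `x` to `y`), so by convexity `v`
is a limit of points of `B(x,r) ∩ B(y,‖y-x‖) ⊆ B(z,r)`, whence `‖v - z‖ ≤ r`.
-/

section NormedSpace

variable {E : Type*} [NormedAddCommGroup E] [NormedSpace ℝ E]

theorem openSegment_subset_ball_of_mem_closedBall {a b c : E} {ρ : ℝ} (ha : a ∈ closedBall c ρ)
    (hb : b ∈ ball c ρ) : openSegment ℝ a b ⊆ ball c ρ := by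
  have hρ : ρ ≠ 0 := (pos_of_mem_ball hb).ne'
  simpa only [isOpen_ball.interior_eq] using
    (convex_ball c ρ).openSegment_closure_interior_subset_interior
      (by rwa [closure_ball c hρ]) (by rwa [isOpen_ball.interior_eq])

theorem mem_closure_ball_inter_ball {a x y : E} {r s : ℝ} (hx : a ∈ closedBall x r)
    (hy : a ∈ closedBall y s) (hne : (ball x r ∩ ball y s).Nonempty) :
    a ∈ closure (ball x r ∩ ball y s) := by
  obtain ⟨b, hbx, hby⟩ := hne
  have hseg : openSegment ℝ a b ⊆ ball x r ∩ ball y s := fun _ hp =>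
    ⟨openSegment_subset_ball_of_mem_closedBall hx hbx hp,
      openSegment_subset_ball_of_mem_closedBall hy hby hp⟩
  exact closure_mono hseg (segment_subset_closure_openSegment (left_mem_segment ℝ a b))

theorem ball_inter_ball_dist_nonempty {x y : E} {r : ℝ} (hr : 0 < r) (hxy : x ≠ y) :
    (ball x r ∩ ball y (dist y x)).Nonempty := by
  have hseg : openSegment ℝ x y ⊆ ball y (dist y x) :=
    openSegment_subset_ball_of_mem_closedBall (mem_closedBall'.2 le_rfl)
      (mem_ball_self (dist_pos.2 hxy.symm))
  have hx : x ∈ closure (openSegment ℝ x y) :=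
    segment_subset_closure_openSegment (left_mem_segment ℝ x y)
  exact (mem_closure_iff.1 hx _ isOpen_ball (mem_ball_self hr)).mono
    (Set.inter_subset_inter_right _ hseg)

end NormedSpace

theorem stmt_13_general {d : ℕ} (V : Finset (EuclideanSpace ℝ (Fin d))) (r : ℝ) (hr : 0 < r)
    (x y : EuclideanSpace ℝ (Fin d))
    (hmax : ∀ v ∈ V, dist y v ≤ dist y x)
    (z : EuclideanSpace ℝ (Fin d)) (hzW : z ∈ W x y r) :
    {v ∈ (V : Set (EuclideanSpace ℝ (Fin d))) | dist v x ≤ r} ⊆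
      {v ∈ (V : Set (EuclideanSpace ℝ (Fin d))) | dist v z ≤ r} := by
  rintro v ⟨hvV, hvx⟩
  refine ⟨hvV, ?_⟩
  obtain ⟨hzy, hWz⟩ := hzW
  have hxy : x ≠ y := fun h => by simp [h] at hzy
  have hv : v ∈ closure (ball x r ∩ ball y (dist y x)) :=
    mem_closure_ball_inter_ball (mem_closedBall.2 hvx) (mem_closedBall'.2 (hmax v hvV))
      (ball_inter_ball_dist_nonempty hr hxy)
  exact mem_closedBall.1 (closure_ball_subset_closedBall (closure_mono hWz hv))

/-- Let `H` be the geometric graph at scale `r` on a finite vertex set `V ⊆ ℝ^d` (edges between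
distinct points at distance at most `r`). If `x ∈ V` is a vertex at maximum distance from
`y ∈ V`, then every vertex `z ∈ V ∩ W(x,y,r)` satisfies `N_H[x] ⊆ N_H[z]`, i.e. every vertex
within distance `r` of `x` is within distance `r` of `z`. -/
theorem stmt_13 {d : ℕ} (V : Finset (EuclideanSpace ℝ (Fin d))) (r : ℝ) (hr : 0 < r)
    (x y : EuclideanSpace ℝ (Fin d)) (hx : x ∈ V) (hy : y ∈ V)
    (hmax : ∀ v ∈ V, dist y v ≤ dist y x)
    (z : EuclideanSpace ℝ (Fin d)) (hzV : z ∈ V) (hzW : z ∈ W x y r) :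
    {v ∈ (V : Set (EuclideanSpace ℝ (Fin d))) | dist v x ≤ r} ⊆
      {v ∈ (V : Set (EuclideanSpace ℝ (Fin d))) | dist v z ≤ r} :=
  stmt_13_general V r hr x y hmax z hzW
end

section
/- Let K ⊆ ℝ^d be a compact smooth d-manifold with boundary. There exist constants δ₃ > 0 and ρ₁ > 0 (depending only on K) such that for every x ∈ K and every 0 < r ≤ ρ₁ there exists z with B(z, δ₃ r) ⊆ B(x, r) ∩ K. -/
open Metric

/-- The half-space `H^d = [0,∞) × ℝ^{d-1}`. -/
def halfSpace (d : ℕ) (hd : 0 < d) : Set (EuclideanSpace ℝ (Fin d)) :=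
  {p | 0 ≤ p ⟨0, hd⟩}

/-- `K ⊆ ℝ^d` is a compact smooth `d`-manifold with boundary (embedded in `ℝ^d`). -/
def IsCompactSmoothManifoldWithBoundary (d : ℕ) (hd : 0 < d)
    (K : Set (EuclideanSpace ℝ (Fin d))) : Prop :=
  IsCompact K ∧ ∀ x ∈ K, ∃ (O U : Set (EuclideanSpace ℝ (Fin d)))
    (φ ψ : EuclideanSpace ℝ (Fin d) → EuclideanSpace ℝ (Fin d)),
    IsOpen O ∧ IsOpen U ∧ x ∈ O ∧
    ContDiffOn ℝ (⊤ : ℕ∞) φ O ∧ ContDiffOn ℝ (⊤ : ℕ∞) ψ U ∧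
    (∀ y ∈ O, φ y ∈ U) ∧ (∀ y ∈ U, ψ y ∈ O) ∧
    (∀ y ∈ O, ψ (φ y) = y) ∧ (∀ y ∈ U, φ (ψ y) = y) ∧
    φ '' (O ∩ K) = U ∩ halfSpace d hd

/-- A coordinate of the difference is bounded by the distance. -/
lemma coord_dist_le {d : ℕ} (v w : EuclideanSpace ℝ (Fin d)) (i : Fin d) :
    dist (v i) (w i) ≤ dist v w := by
  rw [EuclideanSpace.dist_eq]
  rw [show dist (v i) (w i) = Real.sqrt (dist (v i) (w i) ^ 2) from
    (Real.sqrt_sq dist_nonneg).symm]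
  exact Real.sqrt_le_sqrt (Finset.single_le_sum (f := fun j => dist (v j) (w j) ^ 2)
    (fun j _ => sq_nonneg _) (Finset.mem_univ i))

/-- Local version: around each point of `K` there is a neighbourhood on which the
interior-ball property holds with uniform constants. -/
lemma local_ball {d : ℕ} {hd : 0 < d} {K : Set (EuclideanSpace ℝ (Fin d))}
    (hK : IsCompactSmoothManifoldWithBoundary d hd K) {x : EuclideanSpace ℝ (Fin d)}
    (hx : x ∈ K) :
    ∃ δ > (0 : ℝ), ∃ ρ > (0 : ℝ), ∃ V : Set (EuclideanSpace ℝ (Fin d)), V ∈ nhds x ∧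
      ∀ y ∈ K ∩ V, ∀ r : ℝ, 0 < r → r ≤ ρ → ∃ z, ball z (δ * r) ⊆ ball y r ∩ K := by
  obtain ⟨O, U, φ, ψ, hO, hU, hxO, hφ, hψ, hφU, hψO, hψφ, hφψ, himg⟩ := hK.2 x hx
  have hφxU : φ x ∈ U := hφU x hxO
  -- Lipschitz bounds near x and φ x
  obtain ⟨Lφ, t₁, ht₁, hLφ⟩ :=
    ((hφ.contDiffAt (hO.mem_nhds hxO)).of_le (by simp)).exists_lipschitzOnWith
  obtain ⟨Lψ, t₂, ht₂, hLψ⟩ :=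
    ((hψ.contDiffAt (hU.mem_nhds hφxU)).of_le (by simp)).exists_lipschitzOnWith
  obtain ⟨ε₁, hε₁, hb₁⟩ := Metric.nhds_basis_closedBall.mem_iff.mp
    (Filter.inter_mem ht₁ (hO.mem_nhds hxO))
  obtain ⟨ε₂, hε₂, hb₂⟩ := Metric.nhds_basis_closedBall.mem_iff.mp
    (Filter.inter_mem ht₂ (hU.mem_nhds hφxU))
  set b : ℝ := ε₂ / 2 with hb_def
  have hb : 0 < b := by positivity
  -- continuity of φ at x
  have hφcont : ContinuousAt φ x := hφ.continuousOn.continuousAt (hO.mem_nhds hxO)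
  obtain ⟨a₀, ha₀, ha₀'⟩ := Metric.continuousAt_iff.mp hφcont b hb
  set a : ℝ := min (ε₁ / 2) a₀ with ha_def
  have ha : 0 < a := lt_min (by positivity) ha₀
  set L : ℝ := max 1 (Lφ : ℝ) with hL_def
  set M : ℝ := max 1 (Lψ : ℝ) with hM_def
  have hL1 : (1 : ℝ) ≤ L := le_max_left _ _
  have hM1 : (1 : ℝ) ≤ M := le_max_left _ _
  have hL0 : (0 : ℝ) < L := lt_of_lt_of_le one_pos hL1
  have hM0 : (0 : ℝ) < M := lt_of_lt_of_le one_pos hM1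
  refine ⟨1 / (2 * L * M), by positivity, min a (M * b), lt_min ha (by positivity),
    ball x a, ball_mem_nhds x ha, ?_⟩
  rintro y ⟨hyK, hyV⟩ r hr hrρ
  have hra : r ≤ a := le_trans hrρ (min_le_left _ _)
  have hrMb : r ≤ M * b := le_trans hrρ (min_le_right _ _)
  set δ : ℝ := 1 / (2 * L * M) with hδ_def
  set s : ℝ := r / (2 * M) with hs_def
  have hs : 0 < s := by positivity
  have hsb : s ≤ b / 2 := by
    rw [hs_def, div_le_div_iff₀ (by positivity) (by positivity)]
    nlinarith
  have hδr_le : δ * r ≤ r / 2 := by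
    rw [hδ_def]
    rw [div_mul_eq_mul_div, div_le_div_iff₀ (by positivity) (by positivity)]
    have hLM : (1 : ℝ) ≤ L * M := by nlinarith
    nlinarith [mul_nonneg (sub_nonneg.mpr hLM) hr.le]
  have hLδr : L * (δ * r) = s := by
    rw [hδ_def, hs_def]; field_simp
  -- y is in O
  have hyx : dist y x < a := mem_ball.mp hyV
  have hyb₁ : y ∈ closedBall x ε₁ := by
    rw [mem_closedBall]
    have : a ≤ ε₁ := le_trans (min_le_left _ _) (by linarith)
    linarith
  have hyO : y ∈ O := (hb₁ hyb₁).2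
  -- q = φ y is in U ∩ halfSpace, close to φ x
  set q : EuclideanSpace ℝ (Fin d) := φ y with hq_def
  have hqUH : q ∈ U ∩ halfSpace d hd := himg ▸ ⟨y, ⟨hyO, hyK⟩, rfl⟩
  have hqb : dist q (φ x) < b := ha₀' (lt_of_lt_of_le hyx (min_le_right _ _))
  -- the shifted point z'
  set e : EuclideanSpace ℝ (Fin d) := EuclideanSpace.single (⟨0, hd⟩ : Fin d) (1 : ℝ) with he_def
  set z' : EuclideanSpace ℝ (Fin d) := q + s • e with hz'_def
  have hz'q : dist z' q = s := by
    rw [hz'_def, dist_self_add_left, norm_smul, he_def, EuclideanSpace.norm_single]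
    simp [abs_of_nonneg hs.le]
  have hz'coord : z' (⟨0, hd⟩ : Fin d) = q (⟨0, hd⟩ : Fin d) + s := by
    rw [hz'_def]
    simp [he_def, EuclideanSpace.single_apply]
  have hz'b₂ : z' ∈ closedBall (φ x) ε₂ := by
    rw [mem_closedBall]
    calc dist z' (φ x) ≤ dist z' q + dist q (φ x) := dist_triangle _ _ _
      _ ≤ s + b := by rw [hz'q]; linarith
      _ ≤ ε₂ := by rw [hb_def] at hsb ⊢; linarith
  have hqb₂ : q ∈ closedBall (φ x) ε₂ := by
    rw [mem_closedBall]
    rw [hb_def] at hqb; linarith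
  set z : EuclideanSpace ℝ (Fin d) := ψ z' with hz_def
  have hzy : dist z y ≤ M * s := by
    have h1 : dist (ψ z') (ψ q) ≤ (Lψ : ℝ) * dist z' q :=
      hLψ.dist_le_mul z' (hb₂ hz'b₂).1 q (hb₂ hqb₂).1
    have h2 : ψ q = y := hψφ y hyO
    rw [hz_def, ← h2]
    calc dist (ψ z') (ψ q) ≤ (Lψ : ℝ) * dist z' q := h1
      _ ≤ M * s := by rw [hz'q]; exact mul_le_mul_of_nonneg_right (le_max_right _ _) hs.le
  have hMs : M * s = r / 2 := by rw [hs_def]; field_simp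
  have hzx : dist z x ≤ r / 2 + a := by
    calc dist z x ≤ dist z y + dist y x := dist_triangle _ _ _
      _ ≤ r / 2 + a := by rw [← hMs]; linarith [hzy, hyx.le]
  refine ⟨z, ?_⟩
  intro w hw
  have hwz : dist w z < δ * r := mem_ball.mp hw
  -- w is in the chart domain
  have hwb₁ : w ∈ closedBall x ε₁ := by
    rw [mem_closedBall]
    have hae : a ≤ ε₁ / 2 := min_le_left _ _
    have : dist w x ≤ dist w z + dist z x := dist_triangle _ _ _
    have hra2 : r / 2 ≤ a / 2 := by linarith
    calc dist w x ≤ dist w z + dist z x := dist_triangle _ _ _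
      _ ≤ δ * r + (r / 2 + a) := by linarith [hwz.le, hzx]
      _ ≤ ε₁ := by linarith
  have hwO : w ∈ O := (hb₁ hwb₁).2
  have hzb₁ : z ∈ closedBall x ε₁ := by
    rw [mem_closedBall]
    have hae : a ≤ ε₁ / 2 := min_le_left _ _
    have hra2 : r / 2 ≤ a / 2 := by linarith
    calc dist z x ≤ r / 2 + a := hzx
      _ ≤ ε₁ := by linarith
  -- φ w is close to z'
  have hφz : φ z = z' := by rw [hz_def]; exact hφψ z' (hb₂ hz'b₂).2
  have hφwz' : dist (φ w) z' < s := by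
    have h1 : dist (φ w) (φ z) ≤ (Lφ : ℝ) * dist w z :=
      hLφ.dist_le_mul w (hb₁ hwb₁).1 z (hb₁ hzb₁).1
    rw [hφz] at h1
    calc dist (φ w) z' ≤ (Lφ : ℝ) * dist w z := h1
      _ ≤ L * dist w z := mul_le_mul_of_nonneg_right (le_max_right _ _) dist_nonneg
      _ < L * (δ * r) := by exact mul_lt_mul_of_pos_left hwz hL0
      _ = s := hLδr
  -- φ w is in the half-space
  have hφwH : φ w ∈ halfSpace d hd := by
    have hcoord : dist (φ w (⟨0, hd⟩ : Fin d)) (z' (⟨0, hd⟩ : Fin d)) < s :=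
      lt_of_le_of_lt (coord_dist_le _ _ _) hφwz'
    rw [Real.dist_eq, abs_lt] at hcoord
    have hq0 : 0 ≤ q (⟨0, hd⟩ : Fin d) := hqUH.2
    have : z' (⟨0, hd⟩ : Fin d) - s ≤ φ w (⟨0, hd⟩ : Fin d) := by linarith [hcoord.1]
    rw [hz'coord] at this
    exact le_trans hq0 (by linarith)
  -- φ w is in U
  have hφwU : φ w ∈ U := by
    have : dist (φ w) (φ x) ≤ ε₂ := by
      calc dist (φ w) (φ x) ≤ dist (φ w) z' + dist z' (φ x) := dist_triangle _ _ _
        _ ≤ s + (s + b) := by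
            have : dist z' (φ x) ≤ dist z' q + dist q (φ x) := dist_triangle _ _ _
            rw [hz'q] at this
            linarith [hφwz'.le, hqb.le]
        _ ≤ ε₂ := by rw [hb_def] at hsb ⊢; linarith
    exact (hb₂ (mem_closedBall.mpr this)).2
  -- conclude w ∈ K
  have hwK : w ∈ K := by
    have : φ w ∈ φ '' (O ∩ K) := himg ▸ ⟨hφwU, hφwH⟩
    obtain ⟨u, ⟨huO, huK⟩, hu⟩ := this
    have h1 : ψ (φ u) = u := hψφ u huO
    have h2 : ψ (φ w) = w := hψφ w hwO
    rw [hu, h2] at h1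
    exact h1 ▸ huK
  -- conclude w ∈ ball y r
  have hwy : dist w y < r := by
    calc dist w y ≤ dist w z + dist z y := dist_triangle _ _ _
      _ < δ * r + r / 2 := by rw [← hMs]; linarith [hzy]
      _ ≤ r := by linarith
  exact ⟨mem_ball.mpr hwy, hwK⟩

/-- There exist `δ₃ > 0` and `ρ₁ > 0` such that for every `x ∈ K` and `0 < r ≤ ρ₁` some ball
of radius `δ₃ r` is contained in `B(x,r) ∩ K`. -/
theorem stmt_16 (d : ℕ) (hd : 0 < d) (K : Set (EuclideanSpace ℝ (Fin d)))
    (hK : IsCompactSmoothManifoldWithBoundary d hd K) :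
    ∃ δ₃ > (0 : ℝ), ∃ ρ₁ > (0 : ℝ), ∀ x ∈ K, ∀ r : ℝ, 0 < r → r ≤ ρ₁ →
      ∃ z, ball z (δ₃ * r) ⊆ ball x r ∩ K := by
  have loc : ∀ x ∈ K, ∃ δ > (0 : ℝ), ∃ ρ > (0 : ℝ),
      ∃ V : Set (EuclideanSpace ℝ (Fin d)), V ∈ nhds x ∧
      ∀ y ∈ K ∩ V, ∀ r : ℝ, 0 < r → r ≤ ρ → ∃ z, ball z (δ * r) ⊆ ball y r ∩ K :=
    fun x hx => local_ball hK hx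
  choose! δ hδ ρ hρ V hV hloc using loc
  obtain ⟨t, htK, htcov⟩ := hK.1.elim_nhds_subcover V (fun x hx => hV x hx)
  rcases t.eq_empty_or_nonempty with hte | htne
  · -- K is covered by the empty union, hence empty
    refine ⟨1, one_pos, 1, one_pos, fun x hx => ?_⟩
    exfalso
    have := htcov hx
    simp [hte] at this
  · refine ⟨t.inf' htne δ, ?_, t.inf' htne ρ, ?_, ?_⟩
    · rw [gt_iff_lt, Finset.lt_inf'_iff]
      exact fun i hi => hδ i (htK i hi)
    · rw [gt_iff_lt, Finset.lt_inf'_iff]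
      exact fun i hi => hρ i (htK i hi)
    · intro x hx r hr hrρ
      obtain ⟨i, hit, hxVi⟩ := Set.mem_iUnion₂.mp (htcov hx)
      have hiK : i ∈ K := htK i hit
      obtain ⟨z, hz⟩ := hloc i hiK x ⟨hx, hxVi⟩ r hr
        (le_trans hrρ (Finset.inf'_le _ hit))
      refine ⟨z, le_trans (ball_subset_ball ?_) hz⟩
      exact mul_le_mul_of_nonneg_right (Finset.inf'_le _ hit) hr.le
end

section
/- Let K ⊆ ℝ^d be a compact smooth d-manifold with boundary. For every λ > 0 there exists ρ₂ = ρ₂(K, λ) > 0 such that whenever x ∈ K, B(y, r) ⊆ K, ‖x − y‖ ≤ λr and 0 < r < ρ₂, the segment conv({x, y}) is contained in K. -/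
open Metric

open Set

set_option maxHeartbeats 1000000

lemma abs_coord_le_norm {d : ℕ} (w : EuclideanSpace ℝ (Fin d)) (i : Fin d) : |w i| ≤ ‖w‖ := by
  rw [EuclideanSpace.norm_eq]
  rw [← Real.sqrt_sq_eq_abs]
  apply Real.sqrt_le_sqrt
  have : |w i| ^ 2 ≤ ∑ j, ‖w j‖ ^ 2 := by
    have := Finset.single_le_sum (f := fun j => ‖w j‖ ^ 2)
      (fun j _ => by positivity) (Finset.mem_univ i)
    simpa [abs_sq] using this
  simpa [abs_sq] using this

lemma concave_est {g g' g'' : ℝ → ℝ} {M : ℝ}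
    (h1 : ∀ t ∈ Set.Icc (0:ℝ) 1, HasDerivAt g (g' t) t)
    (h2 : ∀ t ∈ Set.Icc (0:ℝ) 1, HasDerivAt g' (g'' t) t)
    (hM : ∀ t ∈ Set.Icc (0:ℝ) 1, g'' t ≤ M)
    {t : ℝ} (ht : t ∈ Set.Icc (0:ℝ) 1) :
    (1 - t) * g 0 + t * g 1 - M / 2 * (t * (1 - t)) ≤ g t := by
  set f : ℝ → ℝ := fun s => g s - M / 2 * s ^ 2 with hf
  set f' : ℝ → ℝ := fun s => g' s - M * s with hf'
  have hfd : ∀ s ∈ Set.Icc (0:ℝ) 1, HasDerivAt f (f' s) s := by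
    intro s hs
    have : HasDerivAt (fun u : ℝ => M / 2 * u ^ 2) (M / 2 * (2 * s)) s :=
      (hasDerivAt_pow 2 s).const_mul (M / 2) |>.congr_deriv (by ring)
    have h := ((h1 s hs).sub this).congr_deriv (show g' s - M / 2 * (2 * s) = g' s - M * s by ring)
    exact h
  have hf'd : ∀ s ∈ Set.Icc (0:ℝ) 1, HasDerivAt f' (g'' s - M) s := by
    intro s hs
    have h := (h2 s hs).sub ((hasDerivAt_id s).const_mul M |>.congr_deriv (show M * 1 = M by ring))
    exact h
  have hint : interior (Set.Icc (0:ℝ) 1) = Set.Ioo 0 1 := interior_Icc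
  have hconc : ConcaveOn ℝ (Set.Icc (0:ℝ) 1) f := by
    apply concaveOn_of_deriv2_nonpos (convex_Icc 0 1)
    · exact fun s hs => (hfd s hs).continuousAt.continuousWithinAt
    · intro s hs
      rw [hint] at hs
      exact ((hfd s (Set.mem_Icc_of_Ioo hs)).differentiableAt).differentiableWithinAt
    · intro s hs
      rw [hint] at hs
      have hev : deriv f =ᶠ[nhds s] f' := by
        filter_upwards [isOpen_Ioo.mem_nhds hs] with u hu
        exact (hfd u (Set.mem_Icc_of_Ioo hu)).deriv
      exact (((hf'd s (Set.mem_Icc_of_Ioo hs)).differentiableAt).congr_of_eventuallyEq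
        hev).differentiableWithinAt
    · intro s hs
      rw [hint] at hs
      have hev : deriv f =ᶠ[nhds s] f' := by
        filter_upwards [isOpen_Ioo.mem_nhds hs] with u hu
        exact (hfd u (Set.mem_Icc_of_Ioo hu)).deriv
      have : deriv (deriv f) s = g'' s - M := by
        rw [hev.deriv_eq]
        exact (hf'd s (Set.mem_Icc_of_Ioo hs)).deriv
      simp only [Function.iterate_succ, Function.iterate_zero, Function.comp_apply, id]
      rw [this]
      linarith [hM s (Set.mem_Icc_of_Ioo hs)]
  obtain ⟨ht0, ht1⟩ := ht
  have key := hconc.2 (Set.left_mem_Icc.2 zero_le_one) (Set.right_mem_Icc.2 zero_le_one)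
    (by linarith : (0:ℝ) ≤ 1 - t) ht0 (by ring)
  have harg : (1 - t) • (0:ℝ) + t • (1:ℝ) = t := by simp
  rw [harg] at key
  simp only [smul_eq_mul, hf] at key ⊢
  nlinarith

lemma local_star (d : ℕ) (hd : 0 < d) (K : Set (EuclideanSpace ℝ (Fin d)))
    (hK : IsCompactSmoothManifoldWithBoundary d hd K) (lam : ℝ) (hlam : 0 < lam)
    (x₀ : EuclideanSpace ℝ (Fin d)) (hx₀ : x₀ ∈ K) :
    ∃ ε > (0:ℝ), ∃ ρ > (0:ℝ), ∀ x ∈ K ∩ ball x₀ ε, ∀ (y : EuclideanSpace ℝ (Fin d)) (r : ℝ),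
      0 < r → r < ρ → ball y r ⊆ K → dist x y ≤ lam * r → segment ℝ x y ⊆ K := by
  classical
  obtain ⟨O, U, φ, ψ, hO, hU, hx₀O, hφ, hψ, hφU, hψO, hψφ, hφψ, him⟩ := hK.2 x₀ hx₀
  -- ε with closedBall x₀ (4ε) ⊆ O
  obtain ⟨ε', hε', hballO⟩ := Metric.isOpen_iff.1 hO x₀ hx₀O
  set ε : ℝ := ε' / 8 with hεdef
  have hε : 0 < ε := by positivity
  have hCO : closedBall x₀ (4 * ε) ⊆ O := fun z hz => hballO (by
    rw [mem_ball]
    rw [mem_closedBall] at hz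
    linarith)
  set C := closedBall x₀ (4 * ε) with hCdef
  have hCcpt : IsCompact C := isCompact_closedBall _ _
  have hφC : IsCompact (φ '' C) := hCcpt.image_of_continuousOn (hφ.continuousOn.mono hCO)
  have hφCU : φ '' C ⊆ U := by rintro _ ⟨z, hz, rfl⟩; exact hφU z (hCO hz)
  obtain ⟨δ, hδ, hthick⟩ := hφC.exists_cthickening_subset_open hU hφCU
  set T := cthickening δ (φ '' C) with hTdef
  have hTU : T ⊆ U := hthick
  have hTcpt : IsCompact T := hφC.cthickening
  -- Lipschitz bound for ψ on T
  obtain ⟨L₀, hL₀⟩ := hTcpt.exists_bound_of_continuousOn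
    ((hψ.continuousOn_fderiv_of_isOpen hU (by simp)).mono hTU)
  set L : ℝ := max L₀ 1 with hLdef
  have hL1 : (1:ℝ) ≤ L := le_max_right _ _
  have hL : 0 < L := lt_of_lt_of_le one_pos hL1
  -- second derivative bound for φ on C
  have hφ1 : ContDiffOn ℝ (⊤ : ℕ∞) (fderiv ℝ φ) O := hφ.fderiv_of_isOpen hO (by simp)
  obtain ⟨M₀, hM₀⟩ := hCcpt.exists_bound_of_continuousOn
    ((hφ1.continuousOn_fderiv_of_isOpen hO (by simp)).mono hCO)
  set M : ℝ := max M₀ 1 with hMdef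
  have hM1 : (1:ℝ) ≤ M := le_max_right _ _
  have hM : 0 < M := lt_of_lt_of_le one_pos hM1
  refine ⟨ε, hε, min (3 * ε / lam) (min (L * δ) (2 / (L * M * lam ^ 2))), by positivity,
    ?_⟩
  rintro x ⟨hxK, hxb⟩ y r hr hrρ hballK hxy
  set c0 : Fin d := ⟨0, hd⟩ with hc0
  have hrε : lam * r ≤ 3 * ε := by
    have := lt_of_lt_of_le hrρ (min_le_left _ _)
    calc lam * r ≤ lam * (3 * ε / lam) := by nlinarith
    _ = 3 * ε := by field_simp
  have hrδ : r ≤ L * δ := le_of_lt (lt_of_lt_of_le hrρ ((min_le_right _ _).trans (min_le_left _ _)))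
  have hrM : r ≤ 2 / (L * M * lam ^ 2) :=
    le_of_lt (lt_of_lt_of_le hrρ ((min_le_right _ _).trans (min_le_right _ _)))
  have hyK : y ∈ K := hballK (mem_ball_self hr)
  set v := y - x with hvdef
  have hv : ‖v‖ ≤ lam * r := by
    rw [hvdef, ← dist_eq_norm, dist_comm]
    exact hxy
  set γ : ℝ → EuclideanSpace ℝ (Fin d) := fun t => x + t • v with hγdef
  have hγC : ∀ t ∈ Set.Icc (0:ℝ) 1, γ t ∈ C := by
    intro t ht
    rw [hCdef, mem_closedBall]
    calc dist (γ t) x₀ ≤ dist (γ t) x + dist x x₀ := dist_triangle _ _ _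
      _ ≤ lam * r + ε := by
          apply add_le_add _ (le_of_lt (mem_ball.1 hxb))
          rw [hγdef]
          simp only [dist_eq_norm, add_sub_cancel_left]
          rw [norm_smul]
          calc ‖t‖ * ‖v‖ ≤ 1 * (lam * r) := by
                apply mul_le_mul _ hv (norm_nonneg _) zero_le_one
                rw [Real.norm_eq_abs, abs_le]; constructor <;> linarith [ht.1, ht.2]
            _ = lam * r := one_mul _
      _ ≤ 4 * ε := by linarith
  have hγO : ∀ t ∈ Set.Icc (0:ℝ) 1, γ t ∈ O := fun t ht => hCO (hγC t ht)
  have hγ0 : γ 0 = x := by simp [hγdef]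
  have hγ1 : γ 1 = y := by simp [hγdef, hvdef]
  have hyC : y ∈ C := hγ1 ▸ hγC 1 (Set.right_mem_Icc.2 zero_le_one)
  have hyO : y ∈ O := hCO hyC
  have hxO : x ∈ O := hγ0 ▸ hγO 0 (Set.left_mem_Icc.2 zero_le_one)
  -- half-space membership of φ of points of K ∩ O
  have hKH : ∀ z ∈ O, z ∈ K → 0 ≤ φ z c0 := by
    intro z hzO hzK
    have : φ z ∈ U ∩ halfSpace d hd := him ▸ Set.mem_image_of_mem φ ⟨hzO, hzK⟩
    exact this.2
  -- reverse: if φ z in half-space and z in O then z ∈ K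
  have hHK : ∀ z ∈ O, 0 ≤ φ z c0 → z ∈ K := by
    intro z hzO hz0
    have : φ z ∈ U ∩ halfSpace d hd := ⟨hφU z hzO, hz0⟩
    rw [← him] at this
    obtain ⟨w, ⟨hwO, hwK⟩, hwe⟩ := this
    have : w = z := by
      have h1 := hψφ w hwO
      have h2 := hψφ z hzO
      rw [hwe] at h1
      rw [h2] at h1
      exact h1.symm
    exact this ▸ hwK
  -- Step 1: lower bound on φ y c0
  have hfderivψ : ∀ q ∈ T, ‖fderiv ℝ ψ q‖ ≤ L := fun q hq => (hL₀ q hq).trans (le_max_left _ _)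
  have hsy : r / L ≤ φ y c0 := by
    by_contra hcon
    push_neg at hcon
    set s := φ y c0 with hsdef
    have hs0 : 0 ≤ s := hKH y hyO hyK
    set t := (s + r / L) / 2 with htdef
    have hst : s < t := by rw [htdef]; linarith
    have htrL : t < r / L := by rw [htdef]; linarith
    have htr : L * t < r := by
      have := (lt_div_iff₀ hL).1 htrL
      linarith [mul_comm t L]
    have htδ : t ≤ δ := by
      have h1 : r / L ≤ δ := (div_le_iff₀ hL).2 (by linarith [mul_comm L δ])
      linarith
    have ht0 : 0 < t := by rw [htdef]; positivity
    set e₀ : EuclideanSpace ℝ (Fin d) := EuclideanSpace.single c0 (1:ℝ) with he₀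
    have he₀n : ‖e₀‖ = 1 := by rw [he₀, EuclideanSpace.norm_single, norm_one]
    set p := φ y - t • e₀ with hpdef
    have hpdist : dist p (φ y) = t := by
      rw [hpdef, dist_eq_norm, sub_sub_cancel_left, norm_neg, norm_smul, he₀n,
        Real.norm_eq_abs, abs_of_pos ht0, mul_one]
    have hφyC : φ y ∈ φ '' C := Set.mem_image_of_mem φ hyC
    have hqT : ∀ q ∈ closedBall (φ y) t, q ∈ T := by
      intro q hq
      exact mem_cthickening_of_dist_le q (φ y) δ _ hφyC ((mem_closedBall.1 hq).trans htδ)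
    have hpT : p ∈ T := hqT p (mem_closedBall.2 (le_of_eq hpdist))
    have hψdiff : ∀ q ∈ closedBall (φ y) t, DifferentiableAt ℝ ψ q := by
      intro q hq
      exact (hψ.differentiableOn (by simp)).differentiableAt (hU.mem_nhds (hTU (hqT q hq)))
    have hlip := Convex.norm_image_sub_le_of_norm_fderiv_le hψdiff
      (fun q hq => hfderivψ q (hqT q hq)) (convex_closedBall _ _)
      (mem_closedBall_self (le_of_lt ht0)) (mem_closedBall.2 (le_of_eq hpdist))
    -- hlip : ‖ψ p - ψ (φ y)‖ ≤ L * ‖p - φ y‖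
    have hψp_ball : ψ p ∈ ball y r := by
      rw [mem_ball, dist_eq_norm]
      have : ψ (φ y) = y := hψφ y hyO
      rw [this] at hlip
      calc ‖ψ p - y‖ ≤ L * ‖p - φ y‖ := hlip
        _ = L * t := by rw [← dist_eq_norm, hpdist]
        _ < r := htr
    have hψpK : ψ p ∈ K := hballK hψp_ball
    have hψpO : ψ p ∈ O := hψO p (hTU hpT)
    have h0 : 0 ≤ φ (ψ p) c0 := hKH (ψ p) hψpO hψpK
    rw [hφψ p (hTU hpT)] at h0
    have hpc0 : p c0 = s - t := by
      rw [hpdef]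
      have : (φ y - t • e₀) c0 = φ y c0 - t * e₀ c0 := rfl
      rw [this, he₀]
      simp [EuclideanSpace.single_apply]
      rfl
    rw [hpc0] at h0
    linarith
  -- Step 2: the curve t ↦ φ (γ t) c0 and its derivatives
  set pr := EuclideanSpace.proj (𝕜 := ℝ) c0 with hpr
  set Φ := fderiv ℝ φ with hΦ
  set g : ℝ → ℝ := fun t => pr (φ (γ t)) with hg
  set g1 : ℝ → ℝ := fun t => pr (Φ (γ t) v) with hg1
  set g2 : ℝ → ℝ := fun t => pr ((fderiv ℝ Φ (γ t) v) v) with hg2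
  have hγd : ∀ t : ℝ, HasDerivAt γ v t := by
    intro t
    have : HasDerivAt (fun u : ℝ => u • v) ((1:ℝ) • v) t := (hasDerivAt_id t).smul_const v
    simpa [hγdef] using this.const_add x
  have hφdiffAt : ∀ t ∈ Set.Icc (0:ℝ) 1, DifferentiableAt ℝ φ (γ t) := fun t ht =>
    (hφ.differentiableOn (by simp)).differentiableAt (hO.mem_nhds (hγO t ht))
  have hΦdiffAt : ∀ t ∈ Set.Icc (0:ℝ) 1, DifferentiableAt ℝ Φ (γ t) := fun t ht =>
    (hφ1.differentiableOn (by simp)).differentiableAt (hO.mem_nhds (hγO t ht))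
  have hgd : ∀ t ∈ Set.Icc (0:ℝ) 1, HasDerivAt g (g1 t) t := by
    intro t ht
    have h1 : HasDerivAt (fun u => φ (γ u)) (Φ (γ t) v) t :=
      ((hφdiffAt t ht).hasFDerivAt).comp_hasDerivAt t (hγd t)
    exact (pr.hasFDerivAt.comp_hasDerivAt t h1)
  have hg1d : ∀ t ∈ Set.Icc (0:ℝ) 1, HasDerivAt g1 (g2 t) t := by
    intro t ht
    have h1 : HasDerivAt (fun u => Φ (γ u)) (fderiv ℝ Φ (γ t) v) t :=
      ((hΦdiffAt t ht).hasFDerivAt).comp_hasDerivAt t (hγd t)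
    have h2 : HasDerivAt (fun u => Φ (γ u) v) ((fderiv ℝ Φ (γ t) v) v) t := by
      simpa using h1.clm_apply (hasDerivAt_const t v)
    exact (pr.hasFDerivAt.comp_hasDerivAt t h2)
  have hg2bound : ∀ t ∈ Set.Icc (0:ℝ) 1, g2 t ≤ M * (lam * r) ^ 2 := by
    intro t ht
    have h1 : |pr ((fderiv ℝ Φ (γ t) v) v)| ≤ ‖(fderiv ℝ Φ (γ t) v) v‖ :=
      abs_coord_le_norm _ c0
    have h2 : ‖(fderiv ℝ Φ (γ t) v) v‖ ≤ ‖fderiv ℝ Φ (γ t)‖ * ‖v‖ * ‖v‖ := by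
      calc ‖(fderiv ℝ Φ (γ t) v) v‖ ≤ ‖fderiv ℝ Φ (γ t) v‖ * ‖v‖ :=
            ContinuousLinearMap.le_opNorm _ _
        _ ≤ ‖fderiv ℝ Φ (γ t)‖ * ‖v‖ * ‖v‖ := by
            apply mul_le_mul_of_nonneg_right (ContinuousLinearMap.le_opNorm _ _) (norm_nonneg _)
    have h3 : ‖fderiv ℝ Φ (γ t)‖ ≤ M := (hM₀ _ (hγC t ht)).trans (le_max_left _ _)
    have h4 : ‖v‖ ≤ lam * r := hv
    have hv0 : (0:ℝ) ≤ ‖v‖ := norm_nonneg _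
    have hlr : (0:ℝ) ≤ lam * r := by positivity
    have h5 : ‖fderiv ℝ Φ (γ t)‖ * ‖v‖ * ‖v‖ ≤ M * (lam * r) ^ 2 := by
      have e1 : ‖fderiv ℝ Φ (γ t)‖ * ‖v‖ * ‖v‖ ≤ M * (lam * r) * (lam * r) :=
        mul_le_mul (mul_le_mul h3 h4 hv0 (le_of_lt hM)) h4 hv0
          (mul_nonneg (le_of_lt hM) hlr)
      calc ‖fderiv ℝ Φ (γ t)‖ * ‖v‖ * ‖v‖ ≤ M * (lam * r) * (lam * r) := e1
        _ = M * (lam * r) ^ 2 := by ring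
    calc g2 t ≤ |g2 t| := le_abs_self _
      _ ≤ ‖(fderiv ℝ Φ (γ t) v) v‖ := h1
      _ ≤ _ := h2.trans h5
  -- concavity estimate
  intro z hz
  rw [segment_eq_image'] at hz
  obtain ⟨t, ht, rfl⟩ := hz
  have hest := concave_est hgd hg1d hg2bound ht
  have hg0 : 0 ≤ g 0 := by
    rw [hg]
    simp only [hγ0]
    exact hKH x hxO hxK
  have hgone : r / L ≤ g 1 := by
    rw [hg]
    simp only [hγ1]
    exact hsy
  have hgt : 0 ≤ g t := by
    have h1 : (1 - t) * g 0 ≥ 0 := mul_nonneg (by linarith [ht.2]) hg0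
    have h2 : t * g 1 ≥ t * (r / L) := mul_le_mul_of_nonneg_left hgone ht.1
    -- r ≤ 2 / (L*M*lam^2) so M * (lam*r)^2 / 2 ≤ r / L
    have h3 : M * (lam * r) ^ 2 / 2 ≤ r / L := by
      rw [le_div_iff₀ hL]
      have hr2 : r * (L * M * lam ^ 2) ≤ 2 := by
        have hpos : (0:ℝ) < L * M * lam ^ 2 := by positivity
        calc r * (L * M * lam ^ 2) ≤ (2 / (L * M * lam ^ 2)) * (L * M * lam ^ 2) :=
              mul_le_mul_of_nonneg_right hrM (le_of_lt hpos)
          _ = 2 := by field_simp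
      nlinarith
    have h4 : M * (lam * r) ^ 2 / 2 * (t * (1 - t)) ≤ r / L * t := by
      have ht1 : t * (1 - t) ≤ t := by nlinarith [ht.1, ht.2]
      have hnn : (0:ℝ) ≤ M * (lam * r) ^ 2 / 2 := by positivity
      calc M * (lam * r) ^ 2 / 2 * (t * (1 - t)) ≤ M * (lam * r) ^ 2 / 2 * t :=
            mul_le_mul_of_nonneg_left ht1 hnn
        _ ≤ r / L * t := mul_le_mul_of_nonneg_right h3 ht.1
      
    nlinarith
  -- conclude
  have hγtO : γ t ∈ O := hγO t ht
  exact hHK (γ t) hγtO hgt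

/-- Local star-shapedness: for every `λ > 0` there is `ρ₂ > 0` such that whenever `x ∈ K`,
`B(y,r) ⊆ K`, `‖x-y‖ ≤ λ r` and `0 < r < ρ₂`, the segment from `x` to `y` lies in `K`. -/
theorem stmt_17 (d : ℕ) (hd : 0 < d) (K : Set (EuclideanSpace ℝ (Fin d)))
    (hK : IsCompactSmoothManifoldWithBoundary d hd K) (lam : ℝ) (hlam : 0 < lam) :
    ∃ ρ₂ > (0 : ℝ), ∀ x ∈ K, ∀ (y : EuclideanSpace ℝ (Fin d)) (r : ℝ), 0 < r → r < ρ₂ →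
      ball y r ⊆ K → dist x y ≤ lam * r → segment ℝ x y ⊆ K := by
  classical
  rcases Set.eq_empty_or_nonempty K with hKe | hKne
  · refine ⟨1, one_pos, ?_⟩
    intro x hx
    rw [hKe] at hx
    exact absurd hx (Set.notMem_empty x)
  · have hloc := fun x (hx : x ∈ K) => local_star d hd K hK lam hlam x hx
    choose! ε hεpos ρ hρpos H using hloc
    have hcov : K ⊆ ⋃ x ∈ K, ball x (ε x) := fun x hx =>
      Set.mem_biUnion hx (mem_ball_self (hεpos x hx))
    obtain ⟨b, hbK, hbfin, hbcov⟩ :=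
      hK.1.elim_finite_subcover_image (fun x _ => isOpen_ball) hcov
    obtain ⟨x₁, hx₁⟩ := hKne
    have hbne : hbfin.toFinset.Nonempty := by
      have h := hbcov hx₁
      rw [Set.mem_iUnion₂] at h
      obtain ⟨i, hi, -⟩ := h
      exact ⟨i, hbfin.mem_toFinset.2 hi⟩
    refine ⟨hbfin.toFinset.inf' hbne ρ, ?_, ?_⟩
    · rw [gt_iff_lt, Finset.lt_inf'_iff]
      intro i hi
      exact hρpos i (hbK (hbfin.mem_toFinset.1 hi))
    · intro x hx y r hr hrρ hb hxy
      have h := hbcov hx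
      rw [Set.mem_iUnion₂] at h
      obtain ⟨i, hi, hxball⟩ := h
      exact H i (hbK hi) x ⟨hx, hxball⟩ y r hr
        (lt_of_lt_of_le hrρ (Finset.inf'_le ρ (hbfin.mem_toFinset.2 hi))) hb hxy
end

section
/- Let K ⊆ ℝ^d be a convex body and let X₁, ..., X_n be points of K such that every ball B(z, ρ) with z ∈ K and B(z,ρ) ⊆ K contains at least one X_i, where ρ = δ₄ r for constants as in the covering lemma. Suppose A ⊆ K is open in K, and the points of {X₁,...,X_n} ∩ A are labelled X_{j₁},...,X_{j_k} in non-decreasing distance from X_{j₁}. If for every 2 ≤ ℓ ≤ k either ‖X_{j_ℓ} − X_{j₁}‖ < r or some earlier point X_{j_m} (m < ℓ) lies in W(X_{j_ℓ}, X_{j₁}, r), then the clique complex of the geometric graph at scale r on {X_{j₁},...,X_{j_k}} is contractible. -/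
/-!
In the given order every point other than the first is dominated, in the geometric graph on the
points up to it, by an earlier point: its closed neighbourhood there is contained in that point's.
If `‖X_{j_ℓ} − X_{j₁}‖ < r`, the first point dominates, since all earlier points are closer to
`X_{j₁}` than `X_{j_ℓ}`. Otherwise the earlier point `X_{j_m} ∈ W(X_{j_ℓ}, X_{j₁}, r)` dominates:
the earlier points lie in the closed ball about `X_{j₁}` of radius `‖X_{j_ℓ} − X_{j₁}‖`, and the
inclusion of open balls defining `W` passes to closed balls, because two overlapping open convex
sets satisfy `closure U ∩ closure V ⊆ closure (U ∩ V)`.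

Deleting a dominated vertex `v`, dominated by `m`, preserves the homotopy type of the clique
complex: the linear map sending the vertex `v` to `m` and fixing the other vertices maps the
complex into the subcomplex without `v`, and it is homotopic to the identity along straight
segments, because a simplex containing `v` together with `m` still spans a simplex. Deleting the
points from the last one backwards leaves a single point.
-/

open Metric

/-- The geometric graph at scale `r` on the points `Y 0, …, Y (k-1)`: distinct indices are
adjacent iff the corresponding points are at distance at most `r`. -/
def geomGraph {k : ℕ} {d : ℕ} (Y : Fin k → EuclideanSpace ℝ (Fin d)) (r : ℝ) :
    SimpleGraph (Fin k) where
  Adj i j := i ≠ j ∧ dist (Y i) (Y j) ≤ r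
  symm := by
    constructor
    intro i j h
    exact ⟨h.1.symm, by rw [dist_comm]; exact h.2⟩
  loopless := by
    constructor
    intro i h
    exact h.1 rfl

theorem closure_inter_closure_subset_closure_inter_of_convex {E : Type*} [AddCommGroup E]
    [Module ℝ E] [TopologicalSpace E] [IsTopologicalAddGroup E] [ContinuousSMul ℝ E]
    {U V : Set E} (hUc : Convex ℝ U) (hVc : Convex ℝ V) (hUo : IsOpen U) (hVo : IsOpen V)
    (hUV : (U ∩ V).Nonempty) : closure U ∩ closure V ⊆ closure (U ∩ V) := by
  obtain ⟨w, hwU, hwV⟩ := hUV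
  rintro p ⟨hpU, hpV⟩
  have hseg {O : Set E} (hOc : Convex ℝ O) (hOo : IsOpen O) (hpO : p ∈ closure O) (hwO : w ∈ O) :
      openSegment ℝ p w ⊆ O := by
    simpa only [hOo.interior_eq] using
      hOc.openSegment_closure_interior_subset_interior hpO (by rwa [hOo.interior_eq])
  exact closure_mono (Set.subset_inter (hseg hUc hUo hpU hwU) (hseg hVc hVo hpV hwV))
    (segment_subset_closure_openSegment (left_mem_segment ℝ p w))

theorem closedBall_inter_closedBall_subset_closedBall {E : Type*} [NormedAddCommGroup E]
    [NormedSpace ℝ E] {x y m : E} {r R : ℝ} (hr : 0 < r) (hR : 0 < R) (hxy : dist x y ≤ R)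
    (h : ball x r ∩ ball y R ⊆ ball m r) : closedBall x r ∩ closedBall y R ⊆ closedBall m r := by
  have hne : (ball x r ∩ ball y R).Nonempty := by
    have hx : x ∈ closure (ball y R) := by rwa [closure_ball y hR.ne']
    obtain ⟨w, hwx, hwy⟩ := mem_closure_iff.1 hx (ball x r) isOpen_ball (mem_ball_self hr)
    exact ⟨w, hwx, hwy⟩
  rw [← closure_ball x hr.ne', ← closure_ball y hR.ne', ← closure_ball m hr.ne']
  exact (closure_inter_closure_subset_closure_inter_of_convex (convex_ball x r)
    (convex_ball y R) isOpen_ball isOpen_ball hne).trans (closure_mono h)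

theorem contractibleSpace_of_segment_deformation {E : Type*} [AddCommGroup E] [Module ℝ E]
    [TopologicalSpace E] [IsTopologicalAddGroup E] [ContinuousSMul ℝ E]
    {S T : Set E} (hTS : T ⊆ S) {L : E → E} (hL : Continuous L)
    (hseg : ∀ p ∈ S, segment ℝ p (L p) ⊆ S) (hLT : Set.MapsTo L S T) [ContractibleSpace T] :
    ContractibleSpace S := by
  obtain ⟨t₀, hT⟩ := id_nullhomotopic T
  let retr : C(S, T) := ⟨fun p => ⟨L p, hLT p.2⟩, by fun_prop⟩
  let incl : C(T, S) := ⟨Set.inclusion hTS, continuous_inclusion hTS⟩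
  have hmem (q : unitInterval × S) : (1 - (q.1 : ℝ)) • (q.2 : E) + (q.1 : ℝ) • L q.2 ∈ S :=
    hseg _ q.2.2 ⟨1 - q.1, q.1, by linarith [q.1.2.2], q.1.2.1, by ring, rfl⟩
  have hid : (ContinuousMap.id S).Homotopic (incl.comp retr) :=
    ⟨{ toFun := fun q => ⟨_, hmem q⟩
       continuous_toFun := by fun_prop
       map_zero_left := fun p => Subtype.ext (by simp)
       map_one_left := fun p => Subtype.ext (by simp [incl, retr]) }⟩
  have hconst : (incl.comp retr).Homotopic (ContinuousMap.const S (incl t₀)) := by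
    simpa [ContinuousMap.comp_assoc] using
      (ContinuousMap.Homotopic.refl incl).comp (hT.comp (ContinuousMap.Homotopic.refl retr))
  exact (contractible_iff_id_nullhomotopic S).2 ⟨incl t₀, hid.trans hconst⟩

section CliqueComplex

variable {V : Type*} [DecidableEq V]

theorem stdBasisVec_eq_single (v : V) : stdBasisVec v = Pi.single v 1 := by
  ext i
  simp [stdBasisVec, Pi.single_apply]

def cliqueRealizationOn (G : SimpleGraph V) (S : Set V) : Set (V → ℝ) :=
  ⋃ s ∈ {s : Finset V | G.IsClique (s : Set V) ∧ (s : Set V) ⊆ S},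
    convexHull ℝ (stdBasisVec '' (s : Set V))

theorem mem_cliqueRealizationOn {G : SimpleGraph V} {S : Set V} {p : V → ℝ} :
    p ∈ cliqueRealizationOn G S ↔ ∃ s : Finset V, G.IsClique (s : Set V) ∧ (s : Set V) ⊆ S ∧
      p ∈ convexHull ℝ (stdBasisVec '' (s : Set V)) := by
  simp [cliqueRealizationOn, and_assoc]

theorem cliqueRealizationOn_univ [Fintype V] (G : SimpleGraph V) :
    cliqueRealizationOn G Set.univ = cliqueRealization G := by
  simp [cliqueRealizationOn, cliqueRealization]

theorem cliqueRealizationOn_singleton (G : SimpleGraph V) (v : V) :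
    cliqueRealizationOn G {v} = {stdBasisVec v} := by
  ext p
  simp only [mem_cliqueRealizationOn, Set.mem_singleton_iff]
  constructor
  · rintro ⟨s, -, hs, hp⟩
    rcases Finset.subset_singleton_iff.1 (by exact_mod_cast hs : s ⊆ {v}) with rfl | rfl
    · simp at hp
    · simpa using hp
  · rintro rfl
    exact ⟨{v}, by simp, by simp, by simp⟩

theorem cliqueRealizationOn_mono (G : SimpleGraph V) {S T : Set V} (hST : S ⊆ T) :
    cliqueRealizationOn G S ⊆ cliqueRealizationOn G T := fun _ hp =>
  let ⟨s, hs, hsS, hps⟩ := mem_cliqueRealizationOn.1 hp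
  mem_cliqueRealizationOn.2 ⟨s, hs, hsS.trans hST, hps⟩

noncomputable def linearVertexMap [Fintype V] (f : V → V) : (V → ℝ) →ₗ[ℝ] (V → ℝ) :=
  Fintype.linearCombination ℝ fun j => stdBasisVec (f j)

theorem linearVertexMap_image_convexHull [Fintype V] (f : V → V) (s : Finset V) :
    linearVertexMap f '' convexHull ℝ (stdBasisVec '' (s : Set V)) =
      convexHull ℝ (stdBasisVec '' (s.image f : Set V)) := by
  rw [LinearMap.image_convexHull, Set.image_image, Finset.coe_image, Set.image_image]
  congr 1
  refine Set.image_congr fun j _ => ?_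
  simp [linearVertexMap, stdBasisVec_eq_single]

theorem contractibleSpace_cliqueRealizationOn_of_dominated [Fintype V] (G : SimpleGraph V)
    (S : Set V) {v m : V} (hm : m ∈ S) (hmv : m ≠ v)
    (hdom : ∀ a ∈ S, (a = v ∨ G.Adj a v) → a = m ∨ G.Adj a m)
    [ContractibleSpace (cliqueRealizationOn G (S \ {v}))] :
    ContractibleSpace (cliqueRealizationOn G S) := by
  set f : V → V := fun j => if j = v then m else j with hf
  have hfS : ∀ j ∈ S, f j ∈ S \ {v} := by
    intro j hj
    by_cases hjv : j = v <;> simp [hf, hjv, hj, hm, hmv]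
  have hsimplex : ∀ s : Finset V, G.IsClique (s : Set V) → (s : Set V) ⊆ S →
      ∃ t : Finset V, G.IsClique (t : Set V) ∧ (t : Set V) ⊆ S ∧ s ⊆ t ∧ s.image f ⊆ t := by
    intro s hs hsS
    by_cases hvs : v ∈ s
    · refine ⟨insert m s, ?_, ?_, Finset.subset_insert _ _, ?_⟩
      · rw [Finset.coe_insert, SimpleGraph.isClique_insert]
        refine ⟨hs, fun b hb hmb => ?_⟩
        have hbv : b = v ∨ G.Adj b v := by
          by_cases hbv : b = v
          · exact .inl hbv
          · exact .inr (hs hb hvs hbv)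
        exact ((hdom b (hsS hb) hbv).resolve_left (Ne.symm hmb)).symm
      · simpa [Set.insert_subset_iff] using ⟨hm, hsS⟩
      · intro a ha
        obtain ⟨j, hj, rfl⟩ := Finset.mem_image.1 ha
        by_cases hjv : j = v <;> simp [hf, hjv, hj]
    · refine ⟨s, hs, hsS, le_rfl, fun a ha => ?_⟩
      obtain ⟨j, hj, rfl⟩ := Finset.mem_image.1 ha
      have hjv : j ≠ v := fun h => hvs (h ▸ hj)
      simpa [hf, hjv] using hj
  have hLp : ∀ s : Finset V, ∀ p ∈ convexHull ℝ (stdBasisVec '' (s : Set V)),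
      linearVertexMap f p ∈ convexHull ℝ (stdBasisVec '' (s.image f : Set V)) := fun s p hp =>
    linearVertexMap_image_convexHull f s ▸ Set.mem_image_of_mem _ hp
  refine contractibleSpace_of_segment_deformation (T := cliqueRealizationOn G (S \ {v}))
    (cliqueRealizationOn_mono G Set.sdiff_subset)
    (linearVertexMap f).continuous_of_finiteDimensional ?_ ?_
  · intro p hp
    obtain ⟨s, hs, hsS, hps⟩ := mem_cliqueRealizationOn.1 hp
    obtain ⟨t, ht, htS, hst, hfst⟩ := hsimplex s hs hsS
    have hsub (u : Finset V) (hu : u ⊆ t) :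
        convexHull ℝ (stdBasisVec '' (u : Set V)) ⊆ convexHull ℝ (stdBasisVec '' (t : Set V)) :=
      convexHull_mono (Set.image_mono (by exact_mod_cast hu))
    refine ((convex_convexHull ℝ _).segment_subset (hsub s hst hps)
      (hsub _ hfst (hLp s p hps))).trans fun q hq => mem_cliqueRealizationOn.2 ⟨t, ht, htS, hq⟩
  · intro p hp
    obtain ⟨s, hs, hsS, hps⟩ := mem_cliqueRealizationOn.1 hp
    obtain ⟨t, ht, -, -, hfst⟩ := hsimplex s hs hsS
    refine mem_cliqueRealizationOn.2
      ⟨s.image f, ht.subset (by exact_mod_cast hfst), ?_, hLp s p hps⟩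
    rw [Finset.coe_image]
    exact Set.image_subset_iff.2 fun j hj => hfS j (hsS hj)

end CliqueComplex

theorem contractibleSpace_cliqueRealization_of_dismantling {k : ℕ} (hk : 0 < k)
    (G : SimpleGraph (Fin k))
    (hdism : ∀ v : Fin k, 0 < (v : ℕ) →
      ∃ m < v, ∀ a ≤ v, (a = v ∨ G.Adj a v) → a = m ∨ G.Adj a m) :
    ContractibleSpace (cliqueRealization G) := by
  have hprefix : ∀ ℓ : ℕ, ContractibleSpace (cliqueRealizationOn G {a | (a : ℕ) ≤ ℓ}) := by
    intro ℓ
    induction ℓ with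
    | zero =>
      have hzero : {a : Fin k | (a : ℕ) ≤ 0} = {⟨0, hk⟩} := by
        ext a
        simp [Fin.ext_iff]
      rw [hzero, cliqueRealizationOn_singleton]
      infer_instance
    | succ ℓ ih =>
      by_cases hℓ : ℓ + 1 < k
      · obtain ⟨m, hmv, hm⟩ := hdism ⟨ℓ + 1, hℓ⟩ ℓ.succ_pos
        have hdel :
            {a : Fin k | (a : ℕ) ≤ ℓ + 1} \ {⟨ℓ + 1, hℓ⟩} = {a : Fin k | (a : ℕ) ≤ ℓ} := by
          ext a
          simp only [Set.mem_sdiff, Set.mem_ofPred_eq, Set.mem_singleton_iff, Fin.ext_iff]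
          omega
        rw [← hdel] at ih
        exact contractibleSpace_cliqueRealizationOn_of_dominated G _
          (Fin.lt_def.1 hmv).le hmv.ne hm
      · have hsame : {a : Fin k | (a : ℕ) ≤ ℓ + 1} = {a : Fin k | (a : ℕ) ≤ ℓ} := by
          ext a
          simp only [Set.mem_ofPred_eq]
          omega
        rwa [hsame]
  have huniv : {a : Fin k | (a : ℕ) ≤ k} = Set.univ := Set.eq_univ_of_forall fun a => a.2.le
  rw [← cliqueRealizationOn_univ, ← huniv]
  exact hprefix k

theorem eq_or_geomGraph_adj_iff {k d : ℕ} (Y : Fin k → EuclideanSpace ℝ (Fin d)) {r : ℝ}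
    (hr : 0 ≤ r) (a b : Fin k) : a = b ∨ (geomGraph Y r).Adj a b ↔ dist (Y a) (Y b) ≤ r := by
  by_cases hab : a = b
  · simp [hab, hr]
  · simp [hab, geomGraph]

theorem stmt_19_general (d k : ℕ) (hk : 0 < k)
    (r : ℝ) (hr : 0 < r)
    (Y : Fin k → EuclideanSpace ℝ (Fin d))
    (hsort : ∀ a b : Fin k, a ≤ b →
      dist (Y ⟨0, hk⟩) (Y a) ≤ dist (Y ⟨0, hk⟩) (Y b))
    (hdom : ∀ ℓ : Fin k, 0 < ℓ.val →
      dist (Y ℓ) (Y ⟨0, hk⟩) < r ∨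
      ∃ m : Fin k, m < ℓ ∧ Y m ∈ W (Y ℓ) (Y ⟨0, hk⟩) r) :
    ContractibleSpace ↥(cliqueRealization (geomGraph Y r)) := by
  refine contractibleSpace_cliqueRealization_of_dismantling hk _ fun v hv => ?_
  simp only [eq_or_geomGraph_adj_iff Y hr.le]
  have hcloser : ∀ a ≤ v, dist (Y a) (Y ⟨0, hk⟩) ≤ dist (Y ⟨0, hk⟩) (Y v) := fun a hav => by
    rw [dist_comm]
    exact hsort a v hav
  rcases hdom v hv with hnear | ⟨m, hmv, hmW⟩
  · refine ⟨⟨0, hk⟩, Fin.lt_def.2 hv, fun a hav _ => ?_⟩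
    exact (hcloser a hav).trans (by rw [dist_comm]; exact hnear.le)
  · refine ⟨m, hmv, fun a hav hav' => ?_⟩
    have hR : 0 < dist (Y ⟨0, hk⟩) (Y v) := dist_nonneg.trans_lt hmW.1
    exact closedBall_inter_closedBall_subset_closedBall hr hR (dist_comm (Y v) _).le hmW.2
      ⟨hav', hcloser a hav⟩

theorem stmt_19 (d n k : ℕ) (hk : 0 < k) (K : Set (EuclideanSpace ℝ (Fin d)))
    (hKconv : Convex ℝ K) (hKcomp : IsCompact K) (hKint : (interior K).Nonempty)
    (r ρ : ℝ) (hr : 0 < r) (hρ : 0 < ρ)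
    (X : Fin n → EuclideanSpace ℝ (Fin d)) (hXK : ∀ i, X i ∈ K)
    (hcover : ∀ z ∈ K, ball z ρ ⊆ K → ∃ i, X i ∈ ball z ρ)
    (U A : Set (EuclideanSpace ℝ (Fin d))) (hU : IsOpen U) (hA : A = U ∩ K)
    (Y : Fin k → EuclideanSpace ℝ (Fin d)) (hYinj : Function.Injective Y)
    (hYrange : Set.range Y = Set.range X ∩ A)
    (hsort : ∀ a b : Fin k, a ≤ b →
      dist (Y ⟨0, hk⟩) (Y a) ≤ dist (Y ⟨0, hk⟩) (Y b))
    (hdom : ∀ ℓ : Fin k, 0 < ℓ.val →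
      dist (Y ℓ) (Y ⟨0, hk⟩) < r ∨
      ∃ m : Fin k, m < ℓ ∧ Y m ∈ W (Y ℓ) (Y ⟨0, hk⟩) r) :
    ContractibleSpace ↥(cliqueRealization (geomGraph Y r)) :=
  stmt_19_general d k hk r hr Y hsort hdom
end
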